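/- arXiv:math/9912251 — 2 statements merged into one kernel-verified Lean document; each statement's English description precedes it below -/
import Mathlib

section
/- Let F be a complete nonarchimedean field (e.g. a p-adic field), W a finite-dimensional F-vector space with an ultrametric norm, and S an endomorphism of W. Then lim_{k→∞} ‖S^k‖^{1/k} equals the spectral radius of S, defined as the maximum of |λ|, where λ ranges over the characteristic roots of S and |·| denotes the unique extension of the absolute value of F to F(λ). -/
open Polynomial Filter IsUltrametricDist
set_option linter.unusedSectionVars false
set_option maxHeartbeats 1000000


section PolyBnd

variable {K : Type*} [NormedField K] [IsUltrametricDist K]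

/-- Coefficient bound predicate: `p` has degree at most `d` and its `i`-th
coefficient has norm at most `r ^ (d - i)`. -/
def PolyBnd (r : ℝ) (d : ℕ) (p : K[X]) : Prop :=
  p.natDegree ≤ d ∧ ∀ i, ‖p.coeff i‖ ≤ r ^ (d - i)

theorem polyBnd_one {r : ℝ} : PolyBnd r 0 (1 : K[X]) := by
  refine ⟨by simp, fun i => ?_⟩
  rcases Nat.eq_zero_or_pos i with rfl | hi
  · simp
  · rw [coeff_one, if_neg (by omega)]
    simp [Nat.sub_eq_zero_of_le]

theorem polyBnd_mul {r : ℝ} (hr : 0 ≤ r) {d₁ d₂ : ℕ} {p q : K[X]}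
    (hp : PolyBnd r d₁ p) (hq : PolyBnd r d₂ q) : PolyBnd r (d₁ + d₂) (p * q) := by
  refine ⟨natDegree_mul_le.trans (add_le_add hp.1 hq.1), fun k => ?_⟩
  rw [coeff_mul]
  refine norm_sum_le_of_forall_le_of_nonneg (pow_nonneg hr _) (fun x hx => ?_)
  rw [Finset.HasAntidiagonal.mem_antidiagonal] at hx
  by_cases h1 : d₁ < x.1
  · rw [coeff_eq_zero_of_natDegree_lt (lt_of_le_of_lt hp.1 h1), zero_mul, norm_zero]
    exact pow_nonneg hr _
  by_cases h2 : d₂ < x.2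
  · rw [coeff_eq_zero_of_natDegree_lt (lt_of_le_of_lt hq.1 h2), mul_zero, norm_zero]
    exact pow_nonneg hr _
  push_neg at h1 h2
  calc ‖p.coeff x.1 * q.coeff x.2‖ ≤ r ^ (d₁ - x.1) * r ^ (d₂ - x.2) := by
        rw [norm_mul]
        exact mul_le_mul (hp.2 _) (hq.2 _) (norm_nonneg _) (pow_nonneg hr _)
    _ = r ^ (d₁ + d₂ - k) := by rw [← pow_add]; congr 1; omega

theorem polyBnd_X_sub_C {r : ℝ} {a : K} (ha : ‖a‖ ≤ r) : PolyBnd r 1 (X - C a) := by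
  refine ⟨(natDegree_X_sub_C a).le, fun i => ?_⟩
  match i with
  | 0 => simpa using ha
  | 1 => simp
  | (i + 2) => rw [coeff_eq_zero_of_natDegree_lt (by rw [natDegree_X_sub_C]; omega)]; simp

theorem polyBnd_neg_C {r : ℝ} {a : K} (ha : ‖a‖ ≤ r) : PolyBnd r 1 (-C a) := by
  refine ⟨by simp, fun i => ?_⟩
  match i with
  | 0 => simpa using ha
  | (i + 1) => simp [coeff_C]

theorem polyBnd_prod {ι : Type*} (s : Finset ι) (f : ι → K[X]) {r : ℝ} (hr : 0 ≤ r)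
    (hf : ∀ i ∈ s, PolyBnd r 1 (f i)) : PolyBnd r s.card (∏ i ∈ s, f i) := by
  induction s using Finset.cons_induction with
  | empty => simpa using polyBnd_one
  | cons a s ha ih =>
    rw [Finset.prod_cons, Finset.card_cons, add_comm]
    exact polyBnd_mul hr (hf a (Finset.mem_cons_self a s))
      (ih fun i hi => hf i (Finset.mem_cons_of_mem hi))

theorem polyBnd_multiset (s : Multiset K) {r : ℝ} (hr : 0 ≤ r) (hs : ∀ a ∈ s, ‖a‖ ≤ r) :
    PolyBnd r (Multiset.card s) ((s.map fun a => X - C a).prod) := by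
  induction s using Multiset.induction_on with
  | empty => simpa using polyBnd_one
  | cons a s ih =>
    rw [Multiset.map_cons, Multiset.prod_cons, Multiset.card_cons, add_comm]
    exact polyBnd_mul hr (polyBnd_X_sub_C (hs a (Multiset.mem_cons_self a s)))
      (ih fun b hb => hs b (Multiset.mem_cons_of_mem hb))

theorem norm_root_le {p : K[X]} (hm : p.Monic) (hd : 1 ≤ p.natDegree) {r : ℝ} (hr : 0 ≤ r)
    (hc : ∀ i, ‖p.coeff i‖ ≤ r ^ (p.natDegree - i)) {μ : K} (hμ : p.eval μ = 0) : ‖μ‖ ≤ r := by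
  by_contra hlt
  push_neg at hlt
  set n := p.natDegree with hn
  have hμpos : 0 < ‖μ‖ := lt_of_le_of_lt hr hlt
  have he : μ ^ n = -(∑ i ∈ Finset.range n, p.coeff i * μ ^ i) := by
    have h0 := eval_eq_sum_range (p := p) μ
    rw [Finset.sum_range_succ, hm.coeff_natDegree, one_mul, hμ] at h0
    exact eq_neg_of_add_eq_zero_right h0.symm
  have key : ‖μ‖ ^ n ≤ r * ‖μ‖ ^ (n - 1) := by
    calc ‖μ‖ ^ n = ‖μ ^ n‖ := (norm_pow μ n).symm
      _ = ‖∑ i ∈ Finset.range n, p.coeff i * μ ^ i‖ := by rw [he, norm_neg]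
      _ ≤ r * ‖μ‖ ^ (n - 1) := by
          refine norm_sum_le_of_forall_le_of_nonneg
            (mul_nonneg hr (pow_nonneg (norm_nonneg μ) _)) (fun i hi => ?_)
          rw [Finset.mem_range] at hi
          have h1 : ‖p.coeff i * μ ^ i‖ ≤ r ^ (n - i) * ‖μ‖ ^ i := by
            rw [norm_mul, norm_pow]
            exact mul_le_mul_of_nonneg_right (hc i) (pow_nonneg (norm_nonneg μ) _)
          refine h1.trans ?_
          have h2 : r ^ (n - i) ≤ r * ‖μ‖ ^ (n - i - 1) := by
            rw [show n - i = (n - i - 1) + 1 by omega, pow_succ, mul_comm]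
            exact mul_le_mul_of_nonneg_left
              (pow_le_pow_left₀ hr hlt.le _) hr
          calc r ^ (n - i) * ‖μ‖ ^ i ≤ (r * ‖μ‖ ^ (n - i - 1)) * ‖μ‖ ^ i :=
                mul_le_mul_of_nonneg_right h2 (pow_nonneg (norm_nonneg μ) _)
            _ = r * ‖μ‖ ^ (n - 1) := by
                rw [mul_assoc, ← pow_add]; congr 2; omega
  have hle : ‖μ‖ ≤ r := by
    have h2 : ‖μ‖ * ‖μ‖ ^ (n - 1) ≤ r * ‖μ‖ ^ (n - 1) := by
      calc ‖μ‖ * ‖μ‖ ^ (n - 1) = ‖μ‖ ^ n := by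
            rw [← pow_succ']; congr 1; omega
        _ ≤ r * ‖μ‖ ^ (n - 1) := key
    exact le_of_mul_le_mul_right (by simpa [mul_comm] using h2) (pow_pos hμpos _)
  exact absurd hle (not_le.mpr hlt)

end PolyBnd


section MatrixAux

theorem eval_charpoly_det {R : Type*} [CommRing R] {ι : Type*} [DecidableEq ι] [Fintype ι]
    (A : Matrix ι ι R) (μ : R) :
    (Matrix.charpoly A).eval μ = (μ • (1 : Matrix ι ι R) - A).det := by
  rw [Matrix.charpoly, ← Polynomial.coe_evalRingHom, RingHom.map_det]
  congr 1
  ext i j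
  by_cases h : i = j
  · subst h
    simp [Matrix.charmatrix_apply_eq, Matrix.one_apply]
  · simp [Matrix.charmatrix_apply_ne _ _ _ h, Matrix.one_apply, h]

theorem charpoly_pow_root {R : Type*} [Field R] [IsAlgClosed R] {ι : Type*}
    [DecidableEq ι] [Fintype ι]
    (A : Matrix ι ι R) {μ : R} (h : (Matrix.charpoly A).eval μ = 0) {k : ℕ} (hk : 1 ≤ k) :
    (Matrix.charpoly (A ^ k)).eval (μ ^ k) = 0 := by
  rw [eval_charpoly_det] at h ⊢
  set q : R[X] := X ^ k - C (μ ^ k) with hq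
  have hqm : q.Monic := monic_X_pow_sub_C _ (by omega)
  have hsp : q.Splits := IsAlgClosed.splits q
  have hfact : q = (q.roots.map fun a => X - C a).prod :=
    hsp.eq_prod_roots_of_monic hqm
  have hμq : μ ∈ q.roots := by
    rw [mem_roots hqm.ne_zero]
    simp [IsRoot, hq]
  have hlist : q = (q.roots.toList.map fun a => X - C a).prod := by
    conv_lhs => rw [hfact]
    rw [← Multiset.prod_coe, ← Multiset.map_coe, Multiset.coe_toList]
  have happ : A ^ k - (μ ^ k) • (1 : Matrix ι ι R) =
      (q.roots.toList.map fun a => A - a • (1 : Matrix ι ι R)).prod := by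
    have h1 := congrArg (aeval A) hlist
    rw [map_list_prod (aeval A : R[X] →ₐ[R] Matrix ι ι R)] at h1
    rw [List.map_map] at h1
    have h2 : aeval A q = A ^ k - (μ ^ k) • (1 : Matrix ι ι R) := by
      simp [hq, Algebra.algebraMap_eq_smul_one, _root_.smul_pow]
    rw [h2] at h1
    simp only [Function.comp_def, map_sub, aeval_X, aeval_C,
      Algebra.algebraMap_eq_smul_one] at h1
    exact h1
  have hdetprod : ∀ l : List R,
      ((l.map fun a => A - a • (1 : Matrix ι ι R)).prod).det =
      (l.map fun a => (A - a • (1 : Matrix ι ι R)).det).prod := by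
    intro l
    induction l with
    | nil => simp
    | cons a l ih => simp [Matrix.det_mul, ih]
  have hdet : (A ^ k - (μ ^ k) • (1 : Matrix ι ι R)).det = 0 := by
    rw [happ, hdetprod]
    refine List.prod_eq_zero ?_
    refine List.mem_map.2 ⟨μ, Multiset.mem_toList.2 hμq, ?_⟩
    have heq : A - μ • (1 : Matrix ι ι R) = -(μ • (1 : Matrix ι ι R) - A) := by rw [neg_sub]
    rw [heq, Matrix.det_neg, h, mul_zero]
  have hswap : (μ ^ k) • (1 : Matrix ι ι R) - A ^ k =
      -(A ^ k - (μ ^ k) • (1 : Matrix ι ι R)) := by rw [neg_sub]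
  rw [hswap, Matrix.det_neg, hdet, mul_zero]

variable {K : Type*} [NormedField K] [IsUltrametricDist K]

theorem charpoly_coeff_le {ι : Type*} [DecidableEq ι] [Fintype ι] (A : Matrix ι ι K) {r : ℝ}
    (hr : 0 ≤ r) (hA : ∀ i j, ‖A i j‖ ≤ r) (i : ℕ) :
    ‖(Matrix.charpoly A).coeff i‖ ≤ r ^ (Fintype.card ι - i) := by
  have hgood : ∀ σ : Equiv.Perm ι,
      PolyBnd r (Fintype.card ι) (∏ j, Matrix.charmatrix A (σ j) j) := by
    intro σ
    have h1 : ∀ j ∈ Finset.univ, PolyBnd r 1 (Matrix.charmatrix A (σ j) j) := by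
      intro j _
      by_cases h : σ j = j
      · rw [h, Matrix.charmatrix_apply_eq]
        exact polyBnd_X_sub_C (hA j j)
      · rw [Matrix.charmatrix_apply_ne _ _ _ h]
        exact polyBnd_neg_C (hA _ _)
    simpa [Finset.card_univ] using polyBnd_prod Finset.univ _ hr h1
  rw [Matrix.charpoly, Matrix.det_apply, finset_sum_coeff]
  refine norm_sum_le_of_forall_le_of_nonneg (pow_nonneg hr _) (fun σ _ => ?_)
  rcases Int.units_eq_one_or (Equiv.Perm.sign σ) with hs | hs <;> rw [hs]
  · simpa using (hgood σ).2 i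
  · simpa using (hgood σ).2 i

end MatrixAux

section Helpers

theorem tendsto_const_rpow_one_div {c : ℝ} (hc : 0 < c) :
    Tendsto (fun k : ℕ => c ^ (1 / k : ℝ)) atTop (nhds 1) := by
  have h1 : Tendsto (fun k : ℕ => (1 / k : ℝ)) atTop (nhds 0) :=
    tendsto_one_div_atTop_nhds_zero_nat
  have h2 : ContinuousAt (fun y : ℝ => c ^ y) 0 := Real.continuousAt_const_rpow hc.ne'
  have h3 := h2.tendsto.comp h1
  simpa [Function.comp_def, Real.rpow_zero] using h3

variable {F : Type*} [NontriviallyNormedField F]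
    {W : Type*} [NormedAddCommGroup W] [NormedSpace F W] [IsUltrametricDist W]

theorem clm_norm_sum_le {ι : Type*} (s : Finset ι) (f : ι → W →L[F] W) {C : ℝ} (hC : 0 ≤ C)
    (h : ∀ i ∈ s, ‖f i‖ ≤ C) : ‖∑ i ∈ s, f i‖ ≤ C := by
  refine ContinuousLinearMap.opNorm_le_bound _ hC fun w => ?_
  rw [ContinuousLinearMap.sum_apply]
  refine norm_sum_le_of_forall_le_of_nonneg (mul_nonneg hC (norm_nonneg w)) fun i hi => ?_
  exact ((f i).le_opNorm w).trans (mul_le_mul_of_nonneg_right (h i hi) (norm_nonneg w))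

theorem clm_coe_pow (S : W →L[F] W) (k : ℕ) :
    ((S ^ k : W →L[F] W) : W →ₗ[F] W) = ((S : W →ₗ[F] W)) ^ k := by
  induction k with
  | zero => rfl
  | succ k ih => rw [pow_succ, pow_succ, ← ih]; rfl

theorem exists_rem_poly {F : Type*} [NontriviallyNormedField F] [IsUltrametricDist F]
    {A : Type*} [Ring A] [Algebra F A] (a : A) {χ : F[X]} {n : ℕ} (hn : 1 ≤ n)
    (hχm : χ.Monic) (hχd : χ.natDegree = n) (hCH : aeval a χ = 0)
    {ρ : ℝ} (hρ : 0 ≤ ρ) (hc : ∀ i, ‖χ.coeff i‖ ≤ ρ ^ (n - i)) (k : ℕ) :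
    ∃ q : F[X], (∀ i, ‖q.coeff i‖ ≤ ρ ^ (k - i)) ∧ (∀ i, n ≤ i → q.coeff i = 0) ∧
      aeval a q = a ^ k := by
  induction k using Nat.strong_induction_on with
  | _ k ih =>
    by_cases hk : k < n
    · refine ⟨X ^ k, ?_, ?_, by simp⟩
      · intro i
        rcases eq_or_ne i k with rfl | hik
        · simp
        · rw [coeff_X_pow, if_neg hik]
          simpa using pow_nonneg hρ _
      · intro i hi
        rw [coeff_X_pow, if_neg (by omega)]
    · push_neg at hk
      obtain ⟨m, rfl⟩ : ∃ m, k = m + 1 := ⟨k - 1, by omega⟩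
      obtain ⟨q, hq1, hq2, hq3⟩ := ih m (by omega)
      have hnm : n - 1 ≤ m := by omega
      refine ⟨X * q - q.coeff (n - 1) • χ, ?_, ?_, ?_⟩
      · intro i
        have hsub : ∀ x y : F, ‖x - y‖ ≤ max ‖x‖ ‖y‖ := fun x y => by
          rw [sub_eq_add_neg]
          exact (norm_add_le_max x (-y)).trans (by rw [norm_neg])
        rw [coeff_sub, coeff_smul]
        refine (hsub _ _).trans (max_le ?_ ?_)
        · match i with
          | 0 => simpa [mul_coeff_zero] using pow_nonneg hρ _
          | (j + 1) =>
            rw [coeff_X_mul]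
            exact (hq1 j).trans (by rw [show m + 1 - (j + 1) = m - j by omega])
        · rw [smul_eq_mul, norm_mul]
          by_cases hin : i ≤ n
          · calc ‖q.coeff (n - 1)‖ * ‖χ.coeff i‖ ≤ ρ ^ (m - (n - 1)) * ρ ^ (n - i) :=
                  mul_le_mul (hq1 _) (hc i) (norm_nonneg _) (pow_nonneg hρ _)
              _ = ρ ^ (m + 1 - i) := by rw [← pow_add]; congr 1; omega
          · rw [coeff_eq_zero_of_natDegree_lt (by omega : χ.natDegree < i)]
            simpa using pow_nonneg hρ _
      · intro i hi
        rw [coeff_sub, coeff_smul, smul_eq_mul,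
          show i = (i - 1) + 1 by omega, coeff_X_mul, show (i - 1) + 1 = i by omega]
        rcases eq_or_lt_of_le hi with heq | hlt
        · have h1 : χ.coeff i = 1 := by
            rw [← heq, ← hχd]; exact hχm.coeff_natDegree
          rw [h1, mul_one, show i - 1 = n - 1 by omega, heq, sub_self]
        · rw [hq2 (i - 1) (by omega), coeff_eq_zero_of_natDegree_lt (show χ.natDegree < i by omega), mul_zero,
            sub_zero]
      · rw [map_sub, map_smul, map_mul, aeval_X, hq3, hCH, smul_zero, sub_zero, pow_succ']

end Helpers

/-- Gelfand–Beurling formula over a complete nonarchimedean field: if `W` is a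
finite-dimensional vector space over a complete nonarchimedean field `F`, equipped with an
ultrametric norm, and `S` is an endomorphism of `W`, then `‖S ^ k‖ ^ (1 / k)` tends to the
spectral radius of `S`, i.e. the supremum of `N lam` over the characteristic roots `lam` of `S`
in an algebraic closure of `F`, where `N` is the (unique) absolute value on the algebraic
closure extending that of `F`. -/
theorem stmt_2 (F : Type*) [NontriviallyNormedField F] [CompleteSpace F]
    [IsUltrametricDist F]
    (W : Type*) [NormedAddCommGroup W] [NormedSpace F W] [IsUltrametricDist W]
    [FiniteDimensional F W]
    (N : AbsoluteValue (AlgebraicClosure F) ℝ)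
    (hN : ∀ x : F, N (algebraMap F (AlgebraicClosure F) x) = ‖x‖)
    (S : W →L[F] W) :
    Filter.Tendsto (fun k : ℕ => ‖S ^ k‖ ^ (1 / k : ℝ)) Filter.atTop
      (nhds (sSup (N '' {lam : AlgebraicClosure F |
        Polynomial.aeval lam (LinearMap.charpoly (S : W →ₗ[F] W)) = 0}))) := by
  classical
  letI : NormedField (AlgebraicClosure F) := N.toNormedField
  have hNE : ∀ x : AlgebraicClosure F, ‖x‖ = N x := fun x => rfl
  haveI : IsUltrametricDist (AlgebraicClosure F) := by
    refine isUltrametricDist_of_forall_norm_natCast_le_one (fun m => ?_)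
    have h1 : ((m : AlgebraicClosure F)) = algebraMap F (AlgebraicClosure F) (m : F) := by
      rw [map_natCast]
    rw [h1, hNE, hN]
    exact isUltrametricDist_iff_forall_norm_natCast_le_one.mp ‹IsUltrametricDist F› m
  have hNF : ∀ x : F, ‖algebraMap F (AlgebraicClosure F) x‖ = ‖x‖ := fun x =>
    (hNE _).trans (hN x)
  set Sl : W →ₗ[F] W := (S : W →ₗ[F] W) with hSl
  set χ : Polynomial F := LinearMap.charpoly Sl with hχ
  have hχm : χ.Monic := Sl.charpoly_monic
  have hχd : χ.natDegree = Module.finrank F W := Sl.charpoly_natDegree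
  set R : Set (AlgebraicClosure F) := {lam | Polynomial.aeval lam χ = 0} with hR
  set nn := Module.finrank F W with hnn
  have hroot_iff : ∀ lam : AlgebraicClosure F,
      lam ∈ R ↔ (χ.map (algebraMap F (AlgebraicClosure F))).eval lam = 0 := by
    intro lam
    rw [hR, Set.mem_setOf_eq, Polynomial.aeval_def, Polynomial.eval_map]
  rcases Nat.eq_zero_or_pos nn with hn0 | hn1
  · -- degenerate case: W is trivial
    haveI : Subsingleton W := by
      rw [hnn] at hn0
      exact Module.finrank_zero_iff.mp hn0
    have hχ1 : χ = 1 := by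
      have h0 : χ.natDegree = 0 := by rw [hχd]; exact hn0
      rw [Polynomial.eq_C_of_natDegree_eq_zero h0]
      have : χ.coeff 0 = 1 := by
        have := hχm.coeff_natDegree
        rwa [h0] at this
      rw [this, map_one]
    have hRempty : R = ∅ := by
      ext lam
      simp only [hR, Set.mem_setOf_eq, Set.mem_empty_iff_false, iff_false]
      rw [hχ1]
      simp
    rw [hRempty, Set.image_empty, Real.sSup_empty]
    refine Filter.Tendsto.congr' ?_ tendsto_const_nhds
    filter_upwards [Filter.eventually_ge_atTop 1] with k hk
    have hS0 : (S ^ k : W →L[F] W) = 0 := ContinuousLinearMap.ext fun w => Subsingleton.elim _ _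
    rw [hS0, norm_zero, Real.zero_rpow]
    positivity
  · -- main case
    set χE := χ.map (algebraMap F (AlgebraicClosure F)) with hχE
    have hχEm : χE.Monic := hχm.map _
    have hχEd : χE.natDegree = nn := by rw [hχE, hχm.natDegree_map, hχd]
    have hχE0 : χE ≠ 0 := hχEm.ne_zero
    have hRfin : R.Finite := by
      refine (Polynomial.finite_setOf_isRoot hχE0).subset ?_
      intro x hx
      exact (hroot_iff x).1 hx
    have hRne : R.Nonempty := by
      obtain ⟨z, hz⟩ := IsAlgClosed.exists_root χE
        (by rw [Polynomial.degree_eq_natDegree hχE0, hχEd]; exact_mod_cast (by omega : nn ≠ 0))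
      exact ⟨z, (hroot_iff z).2 hz⟩
    set ρ := sSup (N '' R) with hρdef
    have himfin : (N '' R).Finite := hRfin.image N
    have himne : (N '' R).Nonempty := hRne.image N
    obtain ⟨lam₀, hlam₀R, hlam₀⟩ : ∃ lam₀ ∈ R, N lam₀ = ρ := by
      obtain ⟨l, hl, he⟩ := himne.csSup_mem himfin
      exact ⟨l, hl, he⟩
    have hub : ∀ lam ∈ R, N lam ≤ ρ := fun lam h =>
      le_csSup himfin.bddAbove ⟨lam, h, rfl⟩
    have hρ0 : 0 ≤ ρ := hlam₀ ▸ N.nonneg lam₀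
    -- coefficient bounds for χ
    have hcoeffχ : ∀ i, ‖χ.coeff i‖ ≤ ρ ^ (nn - i) := by
      have hsplit : χE.Splits := IsAlgClosed.splits χE
      have hcard : Multiset.card χE.roots = nn := by
        have h := hsplit.natDegree_eq_card_roots
        rw [← hχEd, h]
      have hfact : χE = (χE.roots.map fun a => Polynomial.X - Polynomial.C a).prod :=
        hsplit.eq_prod_roots_of_monic hχEm
      have hbnd := polyBnd_multiset χE.roots hρ0 (fun a ha => ?_)
      · intro i
        have h2 := hbnd.2 i
        rw [hcard, ← hfact] at h2
        rw [hχE, Polynomial.coeff_map] at h2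
        rwa [hNF] at h2
      · rw [hNE]
        refine hub a ((hroot_iff a).2 ?_)
        exact (Polynomial.mem_roots hχE0).1 ha
    -- basis and entry bounds
    set b := Module.finBasis F W with hb
    set φ : Fin nn → (W →L[F] F) :=
      fun i => LinearMap.toContinuousLinearMap (b.coord i) with hφ
    set C₀ : ℝ := (∑ i, ‖φ i‖) * (∑ j, ‖b j‖) + 1 with hC₀def
    have hsum1 : 0 ≤ (∑ i, ‖φ i‖) := Finset.sum_nonneg fun _ _ => norm_nonneg _
    have hsum2 : 0 ≤ (∑ j, ‖b j‖) := Finset.sum_nonneg fun _ _ => norm_nonneg _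
    have hC₀1 : 1 ≤ C₀ := by rw [hC₀def]; nlinarith
    have hC₀0 : 0 < C₀ := by linarith
    have hEntry : ∀ (T : W →L[F] W) (i j : Fin nn),
        ‖LinearMap.toMatrix b b (T : W →ₗ[F] W) i j‖ ≤ C₀ * ‖T‖ := by
      intro T i j
      rw [LinearMap.toMatrix_apply]
      have he : (b.repr ((T : W →ₗ[F] W) (b j))) i = φ i (T (b j)) := by
        rw [hφ]
        simp only [LinearMap.coe_toContinuousLinearMap', Module.Basis.coord_apply]
        rfl
      rw [he]
      have h1 : ‖φ i (T (b j))‖ ≤ ‖φ i‖ * (‖T‖ * ‖b j‖) :=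
        ((φ i).le_opNorm _).trans
          (mul_le_mul_of_nonneg_left (T.le_opNorm _) (norm_nonneg _))
      refine h1.trans ?_
      have hφi : ‖φ i‖ ≤ ∑ i', ‖φ i'‖ :=
        Finset.single_le_sum (fun _ _ => norm_nonneg _) (Finset.mem_univ i)
      have hbj : ‖b j‖ ≤ ∑ j', ‖b j'‖ :=
        Finset.single_le_sum (fun _ _ => norm_nonneg _) (Finset.mem_univ j)
      have hprod : ‖φ i‖ * ‖b j‖ ≤ C₀ := by
        rw [hC₀def]
        nlinarith [norm_nonneg (φ i), norm_nonneg (b j)]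
      calc ‖φ i‖ * (‖T‖ * ‖b j‖) = (‖φ i‖ * ‖b j‖) * ‖T‖ := by ring
        _ ≤ C₀ * ‖T‖ := mul_le_mul_of_nonneg_right hprod (norm_nonneg T)
    -- lower bound: ρ ^ k ≤ C₀ * ‖S ^ k‖
    have hlow : ∀ k : ℕ, 1 ≤ k → ρ ^ k ≤ C₀ * ‖(S ^ k : W →L[F] W)‖ := by
      intro k hk
      set Ak := LinearMap.toMatrix b b (((S ^ k : W →L[F] W)) : W →ₗ[F] W) with hAk
      set M0 := LinearMap.toMatrix b b Sl with hM0
      have hAkM : Ak = M0 ^ k := by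
        rw [hAk, hM0, clm_coe_pow, LinearMap.toMatrix_pow]
      have hroot : (Matrix.charpoly (M0.map (algebraMap F (AlgebraicClosure F)))).eval lam₀
          = 0 := by
        rw [Matrix.charpoly_map, hM0, LinearMap.charpoly_toMatrix, ← hχ]
        exact (hroot_iff lam₀).1 hlam₀R
      have hmp : (M0 ^ k).map (algebraMap F (AlgebraicClosure F)) =
          (M0.map (algebraMap F (AlgebraicClosure F))) ^ k := by
        have h := map_pow ((algebraMap F (AlgebraicClosure F)).mapMatrix) M0 k
        simpa [RingHom.mapMatrix_apply] using h
      have h1 : (Matrix.charpoly (Ak.map (algebraMap F (AlgebraicClosure F)))).eval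
          (lam₀ ^ k) = 0 := by
        rw [hAkM, hmp]
        exact charpoly_pow_root _ hroot hk
      have hrk : (0:ℝ) ≤ C₀ * ‖(S ^ k : W →L[F] W)‖ := mul_nonneg hC₀0.le (norm_nonneg _)
      have hcb := charpoly_coeff_le Ak hrk (fun i j => hEntry _ i j)
      have hndeg : ((Matrix.charpoly Ak).map (algebraMap F (AlgebraicClosure F))).natDegree
          = nn := by
        rw [(Matrix.charpoly_monic Ak).natDegree_map, Matrix.charpoly_natDegree_eq_dim,
          Fintype.card_fin]
      have hbig : ‖lam₀ ^ k‖ ≤ C₀ * ‖(S ^ k : W →L[F] W)‖ := by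
        have hmon := (Matrix.charpoly_monic Ak).map (algebraMap F (AlgebraicClosure F))
        refine norm_root_le hmon ?_ hrk (fun i => ?_) ?_
        · rw [hndeg]; omega
        · rw [hndeg, Polynomial.coeff_map, hNF]
          have h5 := hcb i
          rwa [Fintype.card_fin] at h5
        · rw [← Matrix.charpoly_map]
          exact h1
      calc ρ ^ k = ‖lam₀‖ ^ k := by rw [hNE, hlam₀]
        _ = ‖lam₀ ^ k‖ := (norm_pow _ _).symm
        _ ≤ C₀ * ‖(S ^ k : W →L[F] W)‖ := hbig
    -- representation of S ^ k by low-degree polynomials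
    have hCH : Polynomial.aeval Sl χ = 0 := by rw [hχ]; exact Sl.aeval_self_charpoly
    have hSk_eq : ∀ k : ℕ, ∃ q : Polynomial F, (∀ i, ‖q.coeff i‖ ≤ ρ ^ (k - i)) ∧
        (S ^ k : W →L[F] W) = ∑ i ∈ Finset.range nn, q.coeff i • (S ^ i : W →L[F] W) := by
      intro k
      obtain ⟨q, h1, h2, h3⟩ := exists_rem_poly Sl hn1 hχm hχd hCH hρ0 hcoeffχ k
      refine ⟨q, h1, ?_⟩
      have haeval_sum : Polynomial.aeval Sl q =
          ∑ i ∈ Finset.range nn, q.coeff i • Sl ^ i := by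
        rcases eq_or_ne q 0 with rfl | hq0
        · simp
        · have hdeg : q.natDegree < nn := by
            by_contra hge
            push_neg at hge
            exact (Polynomial.leadingCoeff_ne_zero.2 hq0) (h2 _ hge)
          exact Polynomial.aeval_eq_sum_range' hdeg Sl
      apply ContinuousLinearMap.coe_injective
      rw [clm_coe_pow, ← h3, haeval_sum, ContinuousLinearMap.coe_sum]
      refine Finset.sum_congr rfl fun i _ => ?_
      rw [ContinuousLinearMap.coe_smul, clm_coe_pow]
    -- split on ρ = 0 or ρ > 0
    rcases eq_or_lt_of_le hρ0 with hρz | hρpos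
    · -- ρ = 0 : S is nilpotent, the norms vanish eventually
      refine Filter.Tendsto.congr' ?_ (?_ : Filter.Tendsto (fun _ : ℕ => (0:ℝ)) _ _)
      · filter_upwards [Filter.eventually_ge_atTop nn] with k hk
        obtain ⟨q, h1, h2⟩ := hSk_eq k
        have hz : (S ^ k : W →L[F] W) = 0 := by
          rw [h2]
          refine Finset.sum_eq_zero fun i hi => ?_
          rw [Finset.mem_range] at hi
          have hle : ‖q.coeff i‖ ≤ 0 := by
            have := h1 i
            rwa [← hρz, zero_pow (by omega : k - i ≠ 0)] at this
          rw [norm_le_zero_iff.1 hle, zero_smul]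
        rw [hz, norm_zero,
          Real.zero_rpow (one_div_ne_zero (Nat.cast_ne_zero.2 (by omega : k ≠ 0)))]
      · rw [← hρz]
        exact tendsto_const_nhds
    · -- ρ > 0 : squeeze
      set D : ℝ := (∑ i ∈ Finset.range nn, (ρ⁻¹) ^ i * ‖(S ^ i : W →L[F] W)‖) + 1 with hD
      have hDsum : 0 ≤ ∑ i ∈ Finset.range nn, (ρ⁻¹) ^ i * ‖(S ^ i : W →L[F] W)‖ :=
        Finset.sum_nonneg fun i _ =>
          mul_nonneg (pow_nonneg (inv_nonneg.2 hρ0) _) (norm_nonneg _)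
      have hD1 : 1 ≤ D := by rw [hD]; linarith
      have hD0 : 0 < D := by linarith
      have hupper : ∀ k : ℕ, nn ≤ k → ‖(S ^ k : W →L[F] W)‖ ≤ ρ ^ k * D := by
        intro k hk
        obtain ⟨q, h1, h2⟩ := hSk_eq k
        rw [h2]
        refine clm_norm_sum_le _ _ (mul_nonneg (pow_nonneg hρ0 _) hD0.le) fun i hi => ?_
        rw [Finset.mem_range] at hi
        rw [norm_smul]
        have hik : i ≤ k := by omega
        have hpow : ρ ^ (k - i) = ρ ^ k * (ρ⁻¹) ^ i := by
          rw [pow_sub₀ ρ (ne_of_gt hρpos) hik, inv_pow]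
        calc ‖q.coeff i‖ * ‖(S ^ i : W →L[F] W)‖
            ≤ ρ ^ (k - i) * ‖(S ^ i : W →L[F] W)‖ :=
              mul_le_mul_of_nonneg_right (h1 i) (norm_nonneg _)
          _ = ρ ^ k * ((ρ⁻¹) ^ i * ‖(S ^ i : W →L[F] W)‖) := by rw [hpow, mul_assoc]
          _ ≤ ρ ^ k * D := by
              refine mul_le_mul_of_nonneg_left ?_ (pow_nonneg hρ0 k)
              rw [hD]
              have := Finset.single_le_sum
                (f := fun i => (ρ⁻¹) ^ i * ‖(S ^ i : W →L[F] W)‖)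
                (fun i _ => mul_nonneg (pow_nonneg (inv_nonneg.2 hρ0) _) (norm_nonneg _))
                (Finset.mem_range.2 hi)
              linarith
      have hup2 : ∀ k : ℕ, nn ≤ k →
          ‖(S ^ k : W →L[F] W)‖ ^ (1 / k : ℝ) ≤ ρ * D ^ (1 / k : ℝ) := by
        intro k hk
        have hkne : k ≠ 0 := by omega
        have h2 := Real.rpow_le_rpow (norm_nonneg _) (hupper k hk)
          (by positivity : (0:ℝ) ≤ 1 / k)
        simp only [one_div]
        rwa [Real.mul_rpow (pow_nonneg hρ0 _) hD0.le, one_div,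
          Real.pow_rpow_inv_natCast hρ0 hkne] at h2
      have hlo2 : ∀ k : ℕ, nn ≤ k →
          ρ * (C₀ ^ (1 / k : ℝ))⁻¹ ≤ ‖(S ^ k : W →L[F] W)‖ ^ (1 / k : ℝ) := by
        intro k hk
        have hkne : k ≠ 0 := by omega
        have h1 : ρ ^ k / C₀ ≤ ‖(S ^ k : W →L[F] W)‖ := by
          rw [div_le_iff₀ hC₀0]
          calc ρ ^ k ≤ C₀ * ‖(S ^ k : W →L[F] W)‖ := hlow k (by omega)
            _ = ‖(S ^ k : W →L[F] W)‖ * C₀ := mul_comm _ _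
        have h2 := Real.rpow_le_rpow (by positivity) h1 (by positivity : (0:ℝ) ≤ 1 / k)
        simp only [one_div]
        rwa [Real.div_rpow (pow_nonneg hρ0 _) hC₀0.le, one_div,
          Real.pow_rpow_inv_natCast hρ0 hkne, div_eq_mul_inv] at h2
      have hDlim : Filter.Tendsto (fun k : ℕ => ρ * D ^ (1 / k : ℝ))
          Filter.atTop (nhds ρ) := by
        have h := (tendsto_const_rpow_one_div hD0).const_mul ρ
        simpa using h
      have hClim : Filter.Tendsto (fun k : ℕ => ρ * (C₀ ^ (1 / k : ℝ))⁻¹)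
          Filter.atTop (nhds ρ) := by
        have h := ((tendsto_const_rpow_one_div hC₀0).inv₀ (one_ne_zero)).const_mul ρ
        simpa using h
      refine tendsto_of_tendsto_of_tendsto_of_le_of_le' hClim hDlim ?_ ?_
      · filter_upwards [Filter.eventually_ge_atTop nn] with k hk
        exact hlo2 k hk
      · filter_upwards [Filter.eventually_ge_atTop nn] with k hk
        exact hup2 k hk
end

section
/- Let K be a number field. For every T ∈ GL_n(K) (T invertible), the operator height H^op(T) equals H(T), the product of the normalized local operator norms of T. -/
noncomputable section
open scoped Classical
open NumberField IsDedekindDomain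

variable {K : Type} [Field K] [NumberField K]

/-- The normalized absolute value attached to a finite place `v` of `K`
(this is `|x|_v ^ n_v` in the classical notation, with `|p|_v = p⁻¹`). -/
def finAbs (v : HeightOneSpectrum (𝓞 K)) (x : K) : ℝ :=
  if h : x = 0 then 0
  else (Nat.card ((𝓞 K) ⧸ v.asIdeal) : ℝ) ^
    (Multiplicative.toAdd (WithZero.unzero (((v.valuation K).ne_zero_iff).mpr h)))

variable {ι : Type} [Fintype ι]

/-- sup-norm at a finite place (raised to the local degree `n_v`). -/
def finVNorm (v : HeightOneSpectrum (𝓞 K)) (x : ι → K) : ℝ := ⨆ i, finAbs v (x i)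

/-- Euclidean norm at an infinite place. -/
def archVNorm (w : InfinitePlace K) (x : ι → K) : ℝ := Real.sqrt (∑ i, (w (x i)) ^ 2)

/-- The (ℓ²-) Northcott–Weil height on `K^ι`. -/
def vecHt (x : ι → K) : ℝ :=
  ((∏ᶠ v : HeightOneSpectrum (𝓞 K), finVNorm v x) *
    ∏ w : InfinitePlace K, archVNorm w x ^ w.mult) ^ (Module.finrank ℚ K : ℝ)⁻¹

variable {n : ℕ}

/-- local operator norm of a matrix at a finite place (raised to the local degree). -/
def finMNorm (v : HeightOneSpectrum (𝓞 K)) (T : Matrix (Fin n) (Fin n) K) : ℝ :=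
  ⨆ i, ⨆ j, finAbs v (T i j)

/-- The ℓ² operator norm of a complex matrix. -/
def l2OpNorm (M : Matrix (Fin n) (Fin n) ℂ) : ℝ :=
  ‖(LinearMap.toContinuousLinearMap (Matrix.toEuclideanLin M))‖

/-- local operator norm of a matrix at an infinite place. -/
def archMNorm (w : InfinitePlace K) (T : Matrix (Fin n) (Fin n) K) : ℝ :=
  l2OpNorm (T.map w.embedding)

/-- The height `H(T)` of a matrix: the product of the normalized local operator norms. -/
def matHt (T : Matrix (Fin n) (Fin n) K) : ℝ :=
  ((∏ᶠ v : HeightOneSpectrum (𝓞 K), finMNorm v T) *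
    ∏ w : InfinitePlace K, archMNorm w T ^ w.mult) ^ (Module.finrank ℚ K : ℝ)⁻¹

/-- The operator height `H^op(T)` associated to the ℓ² Northcott–Weil height. -/
def opHt (T : Matrix (Fin n) (Fin n) K) : ℝ :=
  ⨆ x : {x : Fin n → K // x ≠ 0}, vecHt (T.mulVec x) / vecHt (x : Fin n → K)

/-- local distance from `y` to (the local closure of) a subspace `X`, at a finite place. -/
def finDist (v : HeightOneSpectrum (𝓞 K)) (X : Submodule K (Fin n → K)) (y : Fin n → K) : ℝ :=
  ⨅ x : X, finVNorm v (y - (x : Fin n → K))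

/-- local distance from `y` to (the local closure of) a subspace `X`, at an infinite place. -/
def archDist (w : InfinitePlace K) (X : Submodule K (Fin n → K)) (y : Fin n → K) : ℝ :=
  ⨅ x : X, archVNorm w (y - (x : Fin n → K))

/-- `d_X(y)`: the product over all places of the local distances from `y` to `X`. -/
def distToSub (X : Submodule K (Fin n → K)) (y : Fin n → K) : ℝ :=
  ((∏ᶠ v : HeightOneSpectrum (𝓞 K), finDist v X y) *
    ∏ w : InfinitePlace K, archDist w X y ^ w.mult) ^ (Module.finrank ℚ K : ℝ)⁻¹

/-- The Plücker coordinates of a subspace `X ⊂ K^n`, relative to a chosen basis of `X`: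
the maximal minors of the matrix whose rows are the basis vectors. -/
def pluecker (X : Submodule K (Fin n → K)) :
    {s : Finset (Fin n) // s.card = Module.finrank K X} → K :=
  fun s => Matrix.det (Matrix.of fun i j =>
    ((Module.finBasis K X i : Fin n → K) (s.1.orderIsoOfFin s.2 j)))

/-- The Schmidt height of a subspace of `K^n`, via Plücker coordinates. -/
def subHt (X : Submodule K (Fin n → K)) : ℝ := vecHt (pluecker X)

section partA
open IsDedekindDomain HeightOneSpectrum Multiplicative WithZero

variable {K : Type} [Field K] [NumberField K] {v : HeightOneSpectrum (𝓞 K)}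

lemma qcard_lt (v : HeightOneSpectrum (𝓞 K)) : 1 < (Nat.card ((𝓞 K) ⧸ v.asIdeal) : ℝ) := by
  haveI F : Finite ((𝓞 K) ⧸ v.asIdeal) := Ideal.finiteQuotientOfFreeOfNeBot _ v.ne_bot
  haveI : Finite ((𝓞 K) ⧸ v.asIdeal) := F
  haveI : Nontrivial ((𝓞 K) ⧸ v.asIdeal) := Ideal.Quotient.nontrivial_iff.mpr v.isPrime.ne_top
  exact_mod_cast Nat.one_lt_cast.mpr Finite.one_lt_card

lemma qcard_pos (v : HeightOneSpectrum (𝓞 K)) : 0 < (Nat.card ((𝓞 K) ⧸ v.asIdeal) : ℝ) :=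
  lt_trans one_pos (qcard_lt v)

lemma finAbs_zero : finAbs v (0 : K) = 0 := dif_pos rfl

lemma finAbs_nonneg (x : K) : 0 ≤ finAbs v x := by
  rw [finAbs]
  split
  · exact le_refl 0
  · exact (zpow_pos (qcard_pos v) _).le

lemma finAbs_pos {x : K} (hx : x ≠ 0) : 0 < finAbs v x := by
  rw [finAbs, dif_neg hx]; exact zpow_pos (qcard_pos v) _

lemma finAbs_le_of_val_le {x y : K} (h : v.valuation K x ≤ v.valuation K y) :
    finAbs v x ≤ finAbs v y := by
  rcases eq_or_ne x 0 with rfl | hx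
  · rw [finAbs_zero]; exact finAbs_nonneg y
  · have hy : y ≠ 0 := by
      rintro rfl
      rw [Valuation.map_zero, le_zero_iff] at h
      exact ((v.valuation K).ne_zero_iff.mpr hx) h
    rw [finAbs, dif_neg hx, finAbs, dif_neg hy]
    refine zpow_le_zpow_right₀ (qcard_lt v).le ?_
    rw [← WithZero.coe_unzero ((v.valuation K).ne_zero_iff.mpr hx),
      ← WithZero.coe_unzero ((v.valuation K).ne_zero_iff.mpr hy), WithZero.coe_le_coe] at h
    exact Multiplicative.toAdd_le.mpr h

lemma finAbs_lt_of_val_lt {x y : K} (hy : y ≠ 0) (h : v.valuation K x < v.valuation K y) :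
    finAbs v x < finAbs v y := by
  rcases eq_or_ne x 0 with rfl | hx
  · rw [finAbs_zero]; exact finAbs_pos hy
  · rw [finAbs, dif_neg hx, finAbs, dif_neg hy]
    refine zpow_lt_zpow_right₀ (qcard_lt v) ?_
    rw [← WithZero.coe_unzero ((v.valuation K).ne_zero_iff.mpr hx),
      ← WithZero.coe_unzero ((v.valuation K).ne_zero_iff.mpr hy), WithZero.coe_lt_coe] at h
    exact Multiplicative.toAdd_lt.mpr h

lemma finAbs_congr {x y : K} (h : v.valuation K x = v.valuation K y) :
    finAbs v x = finAbs v y :=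
  le_antisymm (finAbs_le_of_val_le h.le) (finAbs_le_of_val_le h.ge)

lemma finAbs_mul (v : HeightOneSpectrum (𝓞 K)) (x y : K) :
    finAbs v (x * y) = finAbs v x * finAbs v y := by
  rcases eq_or_ne x 0 with rfl | hx
  · simp [finAbs_zero]
  rcases eq_or_ne y 0 with rfl | hy
  · simp [finAbs_zero]
  have hxy : x * y ≠ 0 := mul_ne_zero hx hy
  rw [finAbs, dif_neg hxy, finAbs, dif_neg hx, finAbs, dif_neg hy,
    ← zpow_add₀ (qcard_pos v).ne']
  congr 1
  rw [← toAdd_mul]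
  congr 1
  have : (↑(WithZero.unzero ((v.valuation K).ne_zero_iff.mpr hxy)) : WithZero (Multiplicative ℤ)) =
      ↑(WithZero.unzero ((v.valuation K).ne_zero_iff.mpr hx) *
        WithZero.unzero ((v.valuation K).ne_zero_iff.mpr hy)) := by
    rw [WithZero.coe_mul, WithZero.coe_unzero, WithZero.coe_unzero, WithZero.coe_unzero, map_mul]
  exact WithZero.coe_inj.mp this

lemma finAbs_one : finAbs v (1 : K) = 1 := by
  have h := finAbs_mul v (1:K) 1
  rw [mul_one] at h
  have h1 : finAbs v (1:K) ≠ 0 := (finAbs_pos one_ne_zero).ne'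
  have h2 : finAbs v (1:K) * 1 = finAbs v (1:K) * finAbs v (1:K) := by
    rw [mul_one]; exact h
  exact (mul_left_cancel₀ h1 h2).symm

lemma finAbs_add_le (x y : K) : finAbs v (x + y) ≤ max (finAbs v x) (finAbs v y) := by
  rcases le_total (v.valuation K x) (v.valuation K y) with h | h
  · refine le_max_of_le_right (finAbs_le_of_val_le ?_)
    exact le_trans ((v.valuation K).map_add x y) (by simp [h])
  · refine le_max_of_le_left (finAbs_le_of_val_le ?_)
    exact le_trans ((v.valuation K).map_add x y) (by simp [h])

lemma finAbs_add_eq {x y : K} (h : finAbs v y < finAbs v x) :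
    finAbs v (x + y) = finAbs v x := by
  have hv : v.valuation K y < v.valuation K x := by
    by_contra hc
    exact absurd (finAbs_le_of_val_le (not_lt.mp hc)) (not_le.mpr h)
  exact finAbs_congr (Valuation.map_add_eq_of_lt_left _ hv)

lemma finAbs_algebraMap_le_one (r : 𝓞 K) : finAbs v (algebraMap (𝓞 K) K r) ≤ 1 := by
  have := finAbs_le_of_val_le (x := algebraMap (𝓞 K) K r) (y := (1:K))
    (by rw [map_one]; exact v.valuation_le_one r)
  rwa [finAbs_one] at this

lemma finAbs_lt_one_of_mem {r : 𝓞 K} (hr : r ∈ v.asIdeal) :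
    finAbs v (algebraMap (𝓞 K) K r) < 1 := by
  rcases eq_or_ne r 0 with rfl | hr0
  · rw [map_zero, finAbs_zero]; exact one_pos
  · have := finAbs_lt_of_val_lt (x := algebraMap (𝓞 K) K r) (y := (1:K)) one_ne_zero
      (by rw [map_one]; exact (v.valuation_lt_one_iff_dvd r).mpr (Ideal.dvd_span_singleton.mpr hr))
    rwa [finAbs_one] at this

end partA

set_option linter.unusedSectionVars false
section partB
open IsDedekindDomain Function

variable {K : Type} [Field K] [NumberField K] {v : HeightOneSpectrum (𝓞 K)} {n : ℕ}

lemma le_iSup_fin {α : Type*} [Finite α] (f : α → ℝ) (i : α) : f i ≤ ⨆ j, f j :=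
  le_ciSup (Set.Finite.bddAbove (Set.finite_range f)) i

lemma exists_iSup_eq {α : Type*} [Finite α] [Nonempty α] (f : α → ℝ) :
    ∃ i0, (⨆ i, f i) = f i0 ∧ ∀ i, f i ≤ f i0 := by
  obtain ⟨i0, hi0⟩ := Finite.exists_max f
  exact ⟨i0, le_antisymm (ciSup_le hi0) (le_iSup_fin f i0), hi0⟩

variable {ι : Type} [Fintype ι]

lemma finVNorm_nonneg (x : ι → K) : 0 ≤ finVNorm v x :=
  Real.iSup_nonneg fun _ => finAbs_nonneg _

lemma finAbs_le_finVNorm (x : ι → K) (i : ι) : finAbs v (x i) ≤ finVNorm v x :=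
  le_iSup_fin (fun j => finAbs v (x j)) i

lemma finVNorm_le [Nonempty ι] {x : ι → K} {c : ℝ} (h : ∀ i, finAbs v (x i) ≤ c) :
    finVNorm v x ≤ c := ciSup_le h

lemma finVNorm_pos {x : ι → K} (hx : x ≠ 0) : 0 < finVNorm v x := by
  obtain ⟨i, hi⟩ := Function.ne_iff.mp hx
  exact lt_of_lt_of_le (finAbs_pos hi) (finAbs_le_finVNorm x i)

lemma finVNorm_eq_one [Nonempty ι] {x : ι → K} (h1 : ∀ i, finAbs v (x i) ≤ 1)
    (i0 : ι) (h : finAbs v (x i0) = 1) : finVNorm v x = 1 :=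
  le_antisymm (finVNorm_le h1) (h ▸ finAbs_le_finVNorm x i0)

lemma finMNorm_rows (v : HeightOneSpectrum (𝓞 K)) (T : Matrix (Fin n) (Fin n) K) :
    finMNorm v T = ⨆ i, finVNorm v (T i) := rfl

lemma finMNorm_nonneg (T : Matrix (Fin n) (Fin n) K) : 0 ≤ finMNorm v T :=
  Real.iSup_nonneg fun _ => Real.iSup_nonneg fun _ => finAbs_nonneg _

lemma finAbs_le_finMNorm (T : Matrix (Fin n) (Fin n) K) (i j : Fin n) :
    finAbs v (T i j) ≤ finMNorm v T := by
  rw [finMNorm_rows]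
  exact le_trans (finAbs_le_finVNorm (T i) j) (le_iSup_fin (fun i => finVNorm v (T i)) i)

lemma finMNorm_le [Nonempty (Fin n)] {T : Matrix (Fin n) (Fin n) K} {c : ℝ}
    (h : ∀ i j, finAbs v (T i j) ≤ c) : finMNorm v T ≤ c :=
  ciSup_le fun i => ciSup_le (h i)

lemma exists_finMNorm_eq [Nonempty (Fin n)] (v : HeightOneSpectrum (𝓞 K))
    (T : Matrix (Fin n) (Fin n) K) :
    ∃ i j, finMNorm v T = finAbs v (T i j) ∧ ∀ a b, finAbs v (T a b) ≤ finAbs v (T i j) := by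
  obtain ⟨⟨i, j⟩, hmax⟩ := Finite.exists_max (fun p : Fin n × Fin n => finAbs v (T p.1 p.2))
  exact ⟨i, j, le_antisymm (finMNorm_le fun a b => hmax (a, b)) (finAbs_le_finMNorm T i j),
    fun a b => hmax (a, b)⟩

lemma finAbs_sum_le {s : Finset ι} {f : ι → K} {c : ℝ} (hc : 0 ≤ c)
    (h : ∀ i ∈ s, finAbs v (f i) ≤ c) : finAbs v (∑ i ∈ s, f i) ≤ c := by
  classical
  induction s using Finset.induction with
  | empty => simpa [finAbs_zero] using hc
  | insert _ _ hni ih =>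
    rw [Finset.sum_insert hni]
    refine le_trans (finAbs_add_le _ _) (max_le (h _ (Finset.mem_insert_self _ _))
      (ih fun i hi => h i (Finset.mem_insert_of_mem hi)))

lemma finAbs_sum_lt {s : Finset ι} {f : ι → K} {c : ℝ} (hc : 0 < c)
    (h : ∀ i ∈ s, finAbs v (f i) < c) : finAbs v (∑ i ∈ s, f i) < c := by
  classical
  induction s using Finset.induction with
  | empty => simpa [finAbs_zero] using hc
  | insert _ _ hni ih =>
    rw [Finset.sum_insert hni]
    refine lt_of_le_of_lt (finAbs_add_le _ _) (max_lt (h _ (Finset.mem_insert_self _ _))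
      (ih fun i hi => h i (Finset.mem_insert_of_mem hi)))

lemma finVNorm_mulVec_le [Nonempty (Fin n)] (M : Matrix (Fin n) (Fin n) K) (x : Fin n → K) :
    finVNorm v (M.mulVec x) ≤ finMNorm v M * finVNorm v x := by
  refine finVNorm_le fun i => ?_
  have : M.mulVec x i = ∑ j, M i j * x j := by
    simp [Matrix.mulVec, dotProduct]
  rw [this]
  refine finAbs_sum_le (mul_nonneg (finMNorm_nonneg M) (finVNorm_nonneg x)) fun j _ => ?_
  rw [finAbs_mul]
  exact mul_le_mul (finAbs_le_finMNorm M i j) (finAbs_le_finVNorm x j) (finAbs_nonneg _)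
    (finMNorm_nonneg M)

lemma finAbs_support {x : K} (hx : x ≠ 0) :
    {v : HeightOneSpectrum (𝓞 K) | finAbs v x ≠ 1}.Finite := by
  obtain ⟨a, b, hb, hab⟩ := IsFractionRing.div_surjective (A := 𝓞 K) x
  have hb0 : b ≠ 0 := nonZeroDivisors.ne_zero hb
  have hbK : algebraMap (𝓞 K) K b ≠ 0 := fun h =>
    hb0 (IsFractionRing.injective (𝓞 K) K (h.trans (map_zero (algebraMap (𝓞 K) K)).symm))
  have ha0 : a ≠ 0 := by
    rintro rfl
    rw [map_zero, zero_div] at hab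
    exact hx hab.symm
  have key : ∀ c : 𝓞 K, c ≠ 0 → ∀ v : HeightOneSpectrum (𝓞 K),
      ¬ v.asIdeal ∣ Ideal.span {c} → finAbs v (algebraMap (𝓞 K) K c) = 1 := by
    intro c hc v hv
    have h1 : v.valuation K (algebraMap (𝓞 K) K c) = 1 := by
      rcases lt_or_eq_of_le (show v.valuation K (algebraMap (𝓞 K) K c) ≤ 1 from v.valuation_le_one c) with h | h
      · exact absurd ((v.valuation_lt_one_iff_dvd c).mp h) hv
      · exact h
    have := finAbs_congr (v := v) (x := algebraMap (𝓞 K) K c) (y := (1:K))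
      (by rw [h1, map_one])
    rwa [finAbs_one] at this
  refine Set.Finite.subset ((Ideal.finite_factors (I := Ideal.span {a})
    (by simpa using ha0)).union (Ideal.finite_factors (I := Ideal.span {b})
    (by simpa using hb0))) ?_
  intro v hv
  by_contra hvn
  rw [Set.mem_union] at hvn
  push_neg at hvn
  obtain ⟨hva, hvb⟩ := hvn
  have h1 : finAbs v (algebraMap (𝓞 K) K a) = 1 := key a ha0 v hva
  have h2 : finAbs v (algebraMap (𝓞 K) K b) = 1 := key b hb0 v hvb
  have hxb : x * algebraMap (𝓞 K) K b = algebraMap (𝓞 K) K a := by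
    rw [← hab]; exact div_mul_cancel₀ _ hbK
  have := finAbs_mul v x (algebraMap (𝓞 K) K b)
  rw [hxb, h1, h2, mul_one] at this
  exact hv this.symm

lemma finVNorm_support {x : ι → K} (hx : x ≠ 0) :
    (Function.mulSupport fun v : HeightOneSpectrum (𝓞 K) => finVNorm v x).Finite := by
  classical
  obtain ⟨i0, hi0⟩ := Function.ne_iff.mp hx
  haveI : Nonempty ι := ⟨i0⟩
  refine Set.Finite.subset (Set.Finite.biUnion (Set.toFinite {i : ι | x i ≠ 0})
    (fun i hi => finAbs_support hi)) ?_
  intro v hv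
  by_contra hvn
  simp only [Set.mem_iUnion, Set.mem_setOf_eq, not_exists] at hvn
  refine hv (finVNorm_eq_one (fun i => ?_) i0 ?_)
  · rcases eq_or_ne (x i) 0 with h | h
    · rw [h, finAbs_zero]; exact zero_le_one
    · have := hvn i; push_neg at this; rw [this h]
  · have := hvn i0; push_neg at this; exact this hi0

lemma finMNorm_support [Nonempty (Fin n)] {T : Matrix (Fin n) (Fin n) K}
    (hrow : ∀ i, T i ≠ 0) :
    (Function.mulSupport fun v : HeightOneSpectrum (𝓞 K) => finMNorm v T).Finite := by
  refine Set.Finite.subset (Set.finite_iUnion fun i : Fin n =>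
    finVNorm_support (hrow i)) ?_
  intro v hv
  by_contra hvn
  simp only [Set.mem_iUnion] at hvn
  push_neg at hvn
  have h1 : ∀ i, finVNorm v (T i) = 1 := fun i => of_not_not (hvn i)
  refine hv ?_
  show finMNorm v T = 1
  rw [finMNorm_rows]
  have h2 : (⨆ i, finVNorm v (T i)) = 1 := by
    refine le_antisymm (ciSup_le fun i => (h1 i).le) ?_
    have := le_iSup_fin (fun i => finVNorm v (T i)) (Classical.arbitrary (Fin n))
    rwa [h1] at this
  exact h2

lemma finprod_mono' {α : Type*} {f g : α → ℝ} (hf : (Function.mulSupport f).Finite)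
    (hg : (Function.mulSupport g).Finite) (h0 : ∀ a, 0 ≤ f a) (h : ∀ a, f a ≤ g a) :
    ∏ᶠ a, f a ≤ ∏ᶠ a, g a := by
  classical
  rw [finprod_eq_prod_of_mulSupport_subset f (s := (hf.union hg).toFinset)
    (by rw [Set.Finite.coe_toFinset]; exact Set.subset_union_left),
    finprod_eq_prod_of_mulSupport_subset g (s := (hf.union hg).toFinset)
    (by rw [Set.Finite.coe_toFinset]; exact Set.subset_union_right)]
  exact Finset.prod_le_prod (fun a _ => h0 a) (fun a _ => h a)

lemma finprod_pos' {α : Type*} {f : α → ℝ} (hf : (Function.mulSupport f).Finite)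
    (h : ∀ a, 0 < f a) : 0 < ∏ᶠ a, f a := by
  classical
  rw [finprod_eq_prod_of_mulSupport_subset f (s := hf.toFinset)
    (by rw [Set.Finite.coe_toFinset])]
  exact Finset.prod_pos fun a _ => h a

end partB

section partC
open NumberField NumberField.InfinitePlace

variable {K : Type} [Field K] [NumberField K] {n : ℕ}

/-- the complex vector attached to `x : K^n` at an infinite place. -/
def embVec (w : InfinitePlace K) (x : Fin n → K) : EuclideanSpace ℂ (Fin n) :=
  (WithLp.equiv 2 (Fin n → ℂ)).symm (fun i => w.embedding (x i))

lemma embVec_apply (w : InfinitePlace K) (x : Fin n → K) (i : Fin n) :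
    embVec w x i = w.embedding (x i) := rfl

lemma archVNorm_eq (w : InfinitePlace K) (x : Fin n → K) : archVNorm w x = ‖embVec w x‖ := by
  rw [archVNorm, EuclideanSpace.norm_eq]
  refine congrArg Real.sqrt (Finset.sum_congr rfl fun i _ => ?_)
  rw [embVec_apply, norm_embedding_eq]

lemma toEuclideanLin_apply' (M : Matrix (Fin n) (Fin n) ℂ) (z : EuclideanSpace ℂ (Fin n))
    (i : Fin n) : Matrix.toEuclideanLin M z i = ∑ j, M i j * z j := by
  rw [Matrix.toEuclideanLin_apply]
  simp [Matrix.mulVec, dotProduct]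

lemma embVec_mulVec (w : InfinitePlace K) (T : Matrix (Fin n) (Fin n) K) (x : Fin n → K) :
    embVec w (T.mulVec x) = Matrix.toEuclideanLin (T.map w.embedding) (embVec w x) := by
  ext i
  rw [embVec_apply, toEuclideanLin_apply']
  simp only [Matrix.mulVec, dotProduct, map_sum, map_mul, Matrix.map_apply, embVec_apply]

lemma l2OpNorm_mulVec_le (M : Matrix (Fin n) (Fin n) ℂ) (y : EuclideanSpace ℂ (Fin n)) :
    ‖Matrix.toEuclideanLin M y‖ ≤ l2OpNorm M * ‖y‖ := by
  exact (LinearMap.toContinuousLinearMap (Matrix.toEuclideanLin M)).le_opNorm y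

lemma archVNorm_nonneg (w : InfinitePlace K) (x : Fin n → K) : 0 ≤ archVNorm w x :=
  Real.sqrt_nonneg _

lemma archMNorm_nonneg (w : InfinitePlace K) (T : Matrix (Fin n) (Fin n) K) :
    0 ≤ archMNorm w T := norm_nonneg _

lemma archVNorm_mulVec_le (w : InfinitePlace K) (T : Matrix (Fin n) (Fin n) K) (x : Fin n → K) :
    archVNorm w (T.mulVec x) ≤ archMNorm w T * archVNorm w x := by
  rw [archVNorm_eq, archVNorm_eq, embVec_mulVec]
  exact l2OpNorm_mulVec_le _ _

lemma archVNorm_pos (w : InfinitePlace K) {x : Fin n → K} (hx : x ≠ 0) :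
    0 < archVNorm w x := by
  rw [archVNorm_eq, norm_pos_iff]
  obtain ⟨i, hi⟩ := Function.ne_iff.mp hx
  intro h0
  have : embVec w x i = 0 := by rw [h0]; rfl
  rw [embVec_apply] at this
  exact hi (by simpa using (map_eq_zero_iff _ w.embedding.injective).mp this)

lemma l2OpNorm_pos {M : Matrix (Fin n) (Fin n) ℂ} (hM : M ≠ 0) : 0 < l2OpNorm M := by
  have hex : ∃ i j, M i j ≠ 0 := by
    by_contra h
    push_neg at h
    exact hM (by ext i j; simpa using h i j)
  obtain ⟨i, j, hij⟩ := hex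
  set u : EuclideanSpace ℂ (Fin n) := (WithLp.equiv 2 (Fin n → ℂ)).symm (Pi.single j 1) with hu
  have hMu : Matrix.toEuclideanLin M u i = M i j := by
    rw [toEuclideanLin_apply']
    simp [u, Pi.single_apply]
  have h1 : 0 < ‖Matrix.toEuclideanLin M u‖ := by
    rw [norm_pos_iff]
    intro h0
    rw [h0] at hMu
    exact hij (by simpa using hMu.symm)
  have h2 := l2OpNorm_mulVec_le M u
  nlinarith [norm_nonneg u]

lemma exists_vec_opNorm (M : Matrix (Fin n) (Fin n) ℂ) {c : ℝ} (hc : 0 ≤ c)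
    (h : c < l2OpNorm M) :
    ∃ u : EuclideanSpace ℂ (Fin n), c * ‖u‖ < ‖Matrix.toEuclideanLin M u‖ := by
  obtain ⟨u, hu1, hu2⟩ :=
    (LinearMap.toContinuousLinearMap (Matrix.toEuclideanLin M)).exists_lt_apply_of_lt_opNorm h
  refine ⟨u, lt_of_le_of_lt ?_ (by simpa using hu2)⟩
  nlinarith [norm_nonneg u]

/-- real part vector. -/
def reVec (z : EuclideanSpace ℂ (Fin n)) : EuclideanSpace ℂ (Fin n) := WithLp.toLp 2 (fun i => ((z i).re : ℂ))
/-- imaginary part vector. -/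
def imVec (z : EuclideanSpace ℂ (Fin n)) : EuclideanSpace ℂ (Fin n) := WithLp.toLp 2 (fun i => ((z i).im : ℂ))

lemma norm_sq_decomp (z : EuclideanSpace ℂ (Fin n)) :
    ‖z‖ ^ 2 = ‖reVec z‖ ^ 2 + ‖imVec z‖ ^ 2 := by
  rw [EuclideanSpace.norm_eq, EuclideanSpace.norm_eq, EuclideanSpace.norm_eq,
    Real.sq_sqrt (by positivity), Real.sq_sqrt (by positivity), Real.sq_sqrt (by positivity),
    ← Finset.sum_add_distrib]
  refine Finset.sum_congr rfl fun i _ => ?_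
  show ‖z i‖ ^ 2 = ‖reVec z i‖ ^ 2 + ‖imVec z i‖ ^ 2
  rw [Complex.sq_norm, Complex.normSq_apply]
  simp only [reVec, imVec]
  rw [Complex.norm_real, Complex.norm_real, Real.norm_eq_abs, Real.norm_eq_abs,
    sq_abs, sq_abs]
  ring

lemma mulVec_reVec (M : Matrix (Fin n) (Fin n) ℂ) (hM : ∀ i j, (M i j).im = 0)
    (z : EuclideanSpace ℂ (Fin n)) :
    Matrix.toEuclideanLin M (reVec z) = reVec (Matrix.toEuclideanLin M z) := by
  ext i
  show Matrix.toEuclideanLin M (reVec z) i = ((Matrix.toEuclideanLin M z i).re : ℂ)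
  rw [toEuclideanLin_apply', toEuclideanLin_apply']
  have h1 : (∑ j, M i j * z j).re = ∑ j, (M i j).re * (z j).re := by
    rw [Complex.re_sum]
    exact Finset.sum_congr rfl fun j _ => by rw [Complex.mul_re, hM i j, zero_mul, sub_zero]
  rw [h1]
  push_cast
  refine Finset.sum_congr rfl fun j _ => ?_
  have hMij : M i j = ((M i j).re : ℂ) := by
    apply Complex.ext <;> simp [hM i j]
  show M i j * ((z j).re : ℂ) = _
  rw [hMij, Complex.ofReal_re]

lemma mulVec_imVec (M : Matrix (Fin n) (Fin n) ℂ) (hM : ∀ i j, (M i j).im = 0)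
    (z : EuclideanSpace ℂ (Fin n)) :
    Matrix.toEuclideanLin M (imVec z) = imVec (Matrix.toEuclideanLin M z) := by
  ext i
  show Matrix.toEuclideanLin M (imVec z) i = ((Matrix.toEuclideanLin M z i).im : ℂ)
  rw [toEuclideanLin_apply', toEuclideanLin_apply']
  have h1 : (∑ j, M i j * z j).im = ∑ j, (M i j).re * (z j).im := by
    rw [Complex.im_sum]
    exact Finset.sum_congr rfl fun j _ => by rw [Complex.mul_im, hM i j, zero_mul, add_zero]
  rw [h1]
  push_cast
  refine Finset.sum_congr rfl fun j _ => ?_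
  have hMij : M i j = ((M i j).re : ℂ) := by
    apply Complex.ext <;> simp [hM i j]
  show M i j * ((z j).im : ℂ) = _
  rw [hMij, Complex.ofReal_re]

end partC

section partC2
open NumberField NumberField.InfinitePlace

variable {K : Type} [Field K] [NumberField K] {n : ℕ}

lemma exists_real_vec (M : Matrix (Fin n) (Fin n) ℂ) (hM : ∀ i j, (M i j).im = 0)
    {c : ℝ} (hc : 0 ≤ c) (h : c < l2OpNorm M) :
    ∃ u : EuclideanSpace ℂ (Fin n), (∀ i, (u i).im = 0) ∧
      c * ‖u‖ < ‖Matrix.toEuclideanLin M u‖ := by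
  obtain ⟨z, hz⟩ := exists_vec_opNorm M hc h
  by_cases hre : c * ‖reVec z‖ < ‖Matrix.toEuclideanLin M (reVec z)‖
  · exact ⟨reVec z, fun i => by simp [reVec], hre⟩
  by_cases him : c * ‖imVec z‖ < ‖Matrix.toEuclideanLin M (imVec z)‖
  · exact ⟨imVec z, fun i => by simp [imVec], him⟩
  exfalso
  push_neg at hre him
  have idz : ‖z‖ ^ 2 = ‖reVec z‖ ^ 2 + ‖imVec z‖ ^ 2 := norm_sq_decomp z
  have idM : ‖Matrix.toEuclideanLin M z‖ ^ 2 =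
      ‖Matrix.toEuclideanLin M (reVec z)‖ ^ 2 + ‖Matrix.toEuclideanLin M (imVec z)‖ ^ 2 := by
    have := norm_sq_decomp (Matrix.toEuclideanLin M z)
    rw [← mulVec_reVec M hM z, ← mulVec_imVec M hM z] at this
    exact this
  have h1 : ‖Matrix.toEuclideanLin M (reVec z)‖ ^ 2 ≤ (c * ‖reVec z‖) ^ 2 :=
    pow_le_pow_left₀ (norm_nonneg _) hre 2
  have h2 : ‖Matrix.toEuclideanLin M (imVec z)‖ ^ 2 ≤ (c * ‖imVec z‖) ^ 2 :=
    pow_le_pow_left₀ (norm_nonneg _) him 2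
  have h3 : (c * ‖z‖) ^ 2 < ‖Matrix.toEuclideanLin M z‖ ^ 2 :=
    pow_lt_pow_left₀ hz (by positivity) two_ne_zero
  have idz' : (c * ‖z‖) ^ 2 = (c * ‖reVec z‖) ^ 2 + (c * ‖imVec z‖) ^ 2 := by
    rw [mul_pow, mul_pow, mul_pow, idz]; ring
  linarith

lemma exists_unit_vec {w : InfinitePlace K} (M : Matrix (Fin n) (Fin n) ℂ)
    (hM : w.IsReal → ∀ i j, (M i j).im = 0) {c : ℝ} (hc : 0 ≤ c) (h : c < l2OpNorm M) :
    ∃ u : EuclideanSpace ℂ (Fin n), ‖u‖ = 1 ∧ (w.IsReal → ∀ i, (u i).im = 0) ∧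
      c < ‖Matrix.toEuclideanLin M u‖ := by
  have key : ∃ u0 : EuclideanSpace ℂ (Fin n), (w.IsReal → ∀ i, (u0 i).im = 0) ∧
      c * ‖u0‖ < ‖Matrix.toEuclideanLin M u0‖ := by
    by_cases hw : w.IsReal
    · obtain ⟨u0, h1, h2⟩ := exists_real_vec M (hM hw) hc h
      exact ⟨u0, fun _ => h1, h2⟩
    · obtain ⟨u0, h2⟩ := exists_vec_opNorm M hc h
      exact ⟨u0, fun hw' => absurd hw' hw, h2⟩
  obtain ⟨u0, h1, h2⟩ := key
  have hu0 : u0 ≠ 0 := by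
    rintro rfl
    rw [map_zero, norm_zero] at h2
    simp at h2
  have hn : 0 < ‖u0‖ := norm_pos_iff.mpr hu0
  refine ⟨‖u0‖⁻¹ • u0, norm_smul_inv_norm hu0, fun hw i => ?_, ?_⟩
  · have := h1 hw i
    simp [PiLp.smul_apply, Complex.real_smul, Complex.mul_im, this]
  · have hmap : Matrix.toEuclideanLin M (‖u0‖⁻¹ • u0) =
        ‖u0‖⁻¹ • Matrix.toEuclideanLin M u0 :=
      LinearMap.map_smul_of_tower _ _ _
    rw [hmap, norm_smul, Real.norm_eq_abs, abs_of_pos (inv_pos.mpr hn)]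
    have hstep : c * ‖u0‖ * ‖u0‖⁻¹ < ‖Matrix.toEuclideanLin M u0‖ * ‖u0‖⁻¹ :=
      mul_lt_mul_of_pos_right h2 (inv_pos.mpr hn)
    rw [mul_assoc, mul_inv_cancel₀ hn.ne', mul_one] at hstep
    rw [mul_comm] at hstep
    exact hstep

end partC2

section partD
open NumberField NumberField.InfinitePlace NumberField.mixedEmbedding Module

lemma basis_round {V : Type*} [NormedAddCommGroup V] [NormedSpace ℝ V] {ιb : Type*} [Fintype ιb]
    (B : Basis ιb ℝ V) (p : V) :
    ‖p - ∑ i, ((round (B.repr p i) : ℤ) : ℝ) • B i‖ ≤ ∑ i, ‖B i‖ := by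
  have key : p - ∑ i, ((round (B.repr p i) : ℤ) : ℝ) • B i
      = ∑ i, ((B.repr p i) - ((round (B.repr p i) : ℤ) : ℝ)) • B i := by
    simp_rw [sub_smul]
    rw [Finset.sum_sub_distrib]
    congr 1
    exact (B.sum_repr p).symm
  rw [key]
  refine le_trans (norm_sum_le _ _) (Finset.sum_le_sum fun i _ => ?_)
  rw [_root_.norm_smul, Real.norm_eq_abs]
  have h1 : |(B.repr p i) - ((round (B.repr p i) : ℤ) : ℝ)| ≤ 1 :=
    le_trans (abs_sub_round _) (by norm_num)
  nlinarith [norm_nonneg (B i), abs_nonneg ((B.repr p i) - ((round (B.repr p i) : ℤ) : ℝ))]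

variable {K : Type} [Field K] [NumberField K]

lemma ideal_cover (𝔞 : Ideal (𝓞 K)) (h𝔞 : 𝔞 ≠ ⊥) :
    ∃ R : ℝ, 0 ≤ R ∧ ∀ p : mixedSpace K, ∃ a ∈ 𝔞,
      ‖p - mixedEmbedding K (algebraMap (𝓞 K) K a)‖ ≤ R := by
  obtain ⟨m, hm𝔞, hm0⟩ := Submodule.exists_mem_ne_zero_of_ne_bot h𝔞
  have hmK : algebraMap (𝓞 K) K m ≠ 0 := fun h =>
    hm0 (IsFractionRing.injective (𝓞 K) K (h.trans (map_zero (algebraMap (𝓞 K) K)).symm))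
  set μ : mixedSpace K := mixedEmbedding K (algebraMap (𝓞 K) K m) with hμdef
  set μ' : mixedSpace K := mixedEmbedding K ((algebraMap (𝓞 K) K m)⁻¹) with hμ'def
  have hμμ' : μ * μ' = 1 := by
    rw [hμdef, hμ'def, ← map_mul, mul_inv_cancel₀ hmK, map_one]
  have hμ'μ : μ' * μ = 1 := by rw [mul_comm]; exact hμμ'
  let e : mixedSpace K ≃ₗ[ℝ] mixedSpace K :=
    LinearEquiv.ofLinear (LinearMap.mulLeft ℝ μ) (LinearMap.mulLeft ℝ μ')
      (LinearMap.ext fun z => by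
        simp only [LinearMap.comp_apply, LinearMap.mulLeft_apply, LinearMap.id_apply,
          ← mul_assoc, hμμ', one_mul])
      (LinearMap.ext fun z => by
        simp only [LinearMap.comp_apply, LinearMap.mulLeft_apply, LinearMap.id_apply,
          ← mul_assoc, hμ'μ, one_mul])
  let B : Basis (Free.ChooseBasisIndex ℤ (𝓞 K)) ℝ (mixedSpace K) := (latticeBasis K).map e
  refine ⟨∑ i, ‖B i‖, Finset.sum_nonneg fun i _ => norm_nonneg _, fun p => ?_⟩
  refine ⟨m * ∑ i, (round (B.repr p i) : ℤ) • RingOfIntegers.basis K i,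
    Ideal.mul_mem_right _ _ hm𝔞, ?_⟩
  have hBi : ∀ i, B i = μ * mixedEmbedding K (algebraMap (𝓞 K) K (RingOfIntegers.basis K i)) := by
    intro i
    rw [show B i = e (latticeBasis K i) from Basis.map_apply _ _ _, latticeBasis_apply]
    show μ * mixedEmbedding K (integralBasis K i) = _
    rw [integralBasis_apply]
  have hsum : (∑ i, ((round (B.repr p i) : ℤ) : ℝ) • B i)
      = mixedEmbedding K (algebraMap (𝓞 K) K
        (m * ∑ i, (round (B.repr p i) : ℤ) • RingOfIntegers.basis K i)) := by
    rw [map_mul (algebraMap (𝓞 K) K), map_mul (mixedEmbedding K),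
      map_sum (algebraMap (𝓞 K) K), map_sum (mixedEmbedding K), Finset.mul_sum]
    refine Finset.sum_congr rfl fun i _ => ?_
    rw [Int.cast_smul_eq_zsmul, hBi i, map_zsmul (algebraMap (𝓞 K) K),
      map_zsmul (mixedEmbedding K), mul_smul_comm]
  calc ‖p - mixedEmbedding K (algebraMap (𝓞 K) K
        (m * ∑ i, (round (B.repr p i) : ℤ) • RingOfIntegers.basis K i))‖
      = ‖p - ∑ i, ((round (B.repr p i) : ℤ) : ℝ) • B i‖ := by rw [hsum]
    _ ≤ ∑ i, ‖B i‖ := basis_round B p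

end partD

section partE
open NumberField NumberField.InfinitePlace NumberField.mixedEmbedding Module

variable {K : Type} [Field K] [NumberField K]

/-- select the component of the mixed space at a place (as a complex number). -/
def selPlace (w : InfinitePlace K) (p : mixedSpace K) : ℂ :=
  if hw : w.IsReal then (p.1 ⟨w, hw⟩ : ℂ) else p.2 ⟨w, not_isReal_iff_isComplex.mp hw⟩

lemma selPlace_embedding (w : InfinitePlace K) (x : K) :
    selPlace w (mixedEmbedding K x) = w.embedding x := by
  rw [selPlace]
  split_ifs with hw
  · rw [mixedEmbedding_apply_isReal, embedding_of_isReal_apply]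
  · rw [mixedEmbedding_apply_isComplex]

lemma selPlace_sub_bound (w : InfinitePlace K) (p q : mixedSpace K) :
    ‖selPlace w p - selPlace w q‖ ≤ ‖p - q‖ := by
  rw [selPlace, selPlace]
  split_ifs with hw
  · have h1 : (p.1 ⟨w, hw⟩ : ℂ) - (q.1 ⟨w, hw⟩ : ℂ) = (((p - q).1 ⟨w, hw⟩ : ℝ) : ℂ) := by
      rw [show (p - q).1 ⟨w, hw⟩ = p.1 ⟨w, hw⟩ - q.1 ⟨w, hw⟩ from rfl]
      push_cast
      ring
    rw [h1, Complex.norm_real]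
    exact le_trans (norm_le_pi_norm ((p - q).1) ⟨w, hw⟩) (norm_fst_le (p - q))
  · have h1 : p.2 _ - q.2 _ = (p - q).2 ⟨w, not_isReal_iff_isComplex.mp hw⟩ := rfl
    rw [h1]
    exact le_trans (norm_le_pi_norm ((p - q).2) _) (norm_snd_le (p - q))

lemma approx_main {n : ℕ} (𝔞 : Ideal (𝓞 K)) (h𝔞 : 𝔞 ≠ ⊥) (a₀ : Fin n → 𝓞 K)
    (u : InfinitePlace K → EuclideanSpace ℂ (Fin n))
    (hureal : ∀ w : InfinitePlace K, w.IsReal → ∀ i, ((u w) i).im = 0) :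
    ∃ B : ℝ, 0 ≤ B ∧ ∀ t : ℝ, ∃ y : Fin n → 𝓞 K, (∀ i, y i ∈ 𝔞) ∧
      ∀ w : InfinitePlace K,
        ‖embVec w (fun i => algebraMap (𝓞 K) K (a₀ i + y i)) - t • u w‖ ≤ B := by
  obtain ⟨R, hR0, hR⟩ := ideal_cover 𝔞 h𝔞
  refine ⟨Real.sqrt (n * R ^ 2), Real.sqrt_nonneg _, fun t => ?_⟩
  -- the target point in the mixed space, for each coordinate
  set P : Fin n → mixedSpace K := fun i =>
    (fun wr => t * ((u wr.1) i).re, fun wc => t * (u wc.1) i) with hP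
  have hselP : ∀ (w : InfinitePlace K) (i : Fin n), selPlace w (P i) = t • (u w i) := by
    intro w i
    rw [selPlace]
    split_ifs with hw
    · have him : (u w i).im = 0 := hureal w hw i
      have : (u w i) = ((u w i).re : ℂ) := Complex.ext (by simp) (by simp [him])
      show ((t * ((u w) i).re : ℝ) : ℂ) = t • (u w i)
      rw [Complex.real_smul]
      push_cast
      rw [← this]
    · show t * (u w i) = t • (u w i)
      rw [Complex.real_smul]
  have hcover : ∀ i : Fin n, ∃ b ∈ 𝔞,
      ‖P i - mixedEmbedding K (algebraMap (𝓞 K) K (a₀ i + b))‖ ≤ R := by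
    intro i
    obtain ⟨b, hb, hbR⟩ := hR (P i - mixedEmbedding K (algebraMap (𝓞 K) K (a₀ i)))
    refine ⟨b, hb, ?_⟩
    rw [map_add, map_add]
    have : P i - (mixedEmbedding K (algebraMap (𝓞 K) K (a₀ i)) +
        mixedEmbedding K (algebraMap (𝓞 K) K b)) =
        P i - mixedEmbedding K (algebraMap (𝓞 K) K (a₀ i)) -
        mixedEmbedding K (algebraMap (𝓞 K) K b) := by ring
    rw [this]
    exact hbR
  choose y hy𝔞 hyR using hcover
  refine ⟨y, hy𝔞, fun w => ?_⟩
  have hcomp : ∀ i : Fin n,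
      ‖w.embedding (algebraMap (𝓞 K) K (a₀ i + y i)) - t • (u w i)‖ ≤ R := by
    intro i
    have := selPlace_sub_bound w (mixedEmbedding K (algebraMap (𝓞 K) K (a₀ i + y i))) (P i)
    rw [selPlace_embedding, hselP w i] at this
    refine le_trans this ?_
    rw [← norm_neg]
    simpa [neg_sub] using hyR i
  rw [EuclideanSpace.norm_eq]
  refine Real.sqrt_le_sqrt ?_
  have hterm : ∀ i : Fin n,
      ‖(embVec w (fun i => algebraMap (𝓞 K) K (a₀ i + y i)) - t • u w) i‖ ^ 2 ≤ R ^ 2 := by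
    intro i
    have h1 : (embVec w (fun i => algebraMap (𝓞 K) K (a₀ i + y i)) - t • u w) i =
        w.embedding (algebraMap (𝓞 K) K (a₀ i + y i)) - t • (u w i) := by
      simp [embVec_apply, PiLp.sub_apply, PiLp.smul_apply]
    rw [h1]
    exact pow_le_pow_left₀ (norm_nonneg _) (hcomp i) 2
  calc (∑ i, ‖(embVec w (fun i => algebraMap (𝓞 K) K (a₀ i + y i)) - t • u w) i‖ ^ 2)
      ≤ ∑ _i : Fin n, R ^ 2 := Finset.sum_le_sum fun i _ => hterm i
    _ = n * R ^ 2 := by rw [Finset.sum_const, Finset.card_univ, Fintype.card_fin, nsmul_eq_mul]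

end partE

section partF1
open NumberField NumberField.InfinitePlace IsDedekindDomain Function

variable {K : Type} [Field K] [NumberField K] {n : ℕ}

lemma dpos : (0:ℝ) < (Module.finrank ℚ K : ℝ) := by exact_mod_cast Module.finrank_pos

lemma vecHt_pos {x : Fin n → K} (hx : x ≠ 0) : 0 < vecHt x := by
  rw [vecHt]
  apply Real.rpow_pos_of_pos
  apply mul_pos
  · exact finprod_pos' (finVNorm_support hx) (fun v => finVNorm_pos hx)
  · exact Finset.prod_pos fun w _ => pow_pos (archVNorm_pos w hx) _

lemma vecHt_nonneg (x : Fin n → K) : 0 ≤ vecHt x := by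
  rw [vecHt]
  apply Real.rpow_nonneg
  exact mul_nonneg (finprod_nonneg fun v => finVNorm_nonneg x)
    (Finset.prod_nonneg fun w _ => pow_nonneg (archVNorm_nonneg w x) _)

lemma matHt_nonneg (T : Matrix (Fin n) (Fin n) K) : 0 ≤ matHt T := by
  rw [matHt]
  apply Real.rpow_nonneg
  exact mul_nonneg (finprod_nonneg fun v => finMNorm_nonneg T)
    (Finset.prod_nonneg fun w _ => pow_nonneg (archMNorm_nonneg w T) _)

lemma rows_ne [Nonempty (Fin n)] {T : Matrix (Fin n) (Fin n) K} (hT : IsUnit T.det) :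
    ∀ i, T i ≠ 0 := by
  intro i h
  rw [Matrix.det_eq_zero_of_row_eq_zero i (fun j => congrFun h j)] at hT
  simpa [isUnit_zero_iff] using hT

lemma mulVec_ne_zero [Nonempty (Fin n)] {T : Matrix (Fin n) (Fin n) K} (hT : IsUnit T.det)
    {x : Fin n → K} (hx : x ≠ 0) : T.mulVec x ≠ 0 := by
  intro h
  apply hx
  have := congrArg (fun z => Matrix.mulVec T⁻¹ z) h
  simpa [Matrix.mulVec_mulVec, Matrix.nonsing_inv_mul T hT, Matrix.mulVec_zero,
    Matrix.one_mulVec] using this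

lemma key_upper [Nonempty (Fin n)] {T : Matrix (Fin n) (Fin n) K} (hT : IsUnit T.det)
    {x : Fin n → K} (hx : x ≠ 0) : vecHt (T.mulVec x) ≤ matHt T * vecHt x := by
  have hsT : (mulSupport fun v : HeightOneSpectrum (𝓞 K) => finMNorm v T).Finite :=
    finMNorm_support (rows_ne hT)
  have hsx := finVNorm_support hx
  have hTx : T.mulVec x ≠ 0 := mulVec_ne_zero hT hx
  have hfin : (∏ᶠ v : HeightOneSpectrum (𝓞 K), finVNorm v (T.mulVec x)) ≤
      (∏ᶠ v : HeightOneSpectrum (𝓞 K), finMNorm v T) *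
      ∏ᶠ v : HeightOneSpectrum (𝓞 K), finVNorm v x := by
    rw [← finprod_mul_distrib hsT hsx]
    refine finprod_mono' (finVNorm_support hTx)
      (Set.Finite.subset (hsT.union hsx) (mulSupport_mul _ _))
      (fun v => finVNorm_nonneg _) (fun v => finVNorm_mulVec_le T x)
  have harch : (∏ w : InfinitePlace K, archVNorm w (T.mulVec x) ^ w.mult) ≤
      (∏ w : InfinitePlace K, archMNorm w T ^ w.mult) *
      ∏ w : InfinitePlace K, archVNorm w x ^ w.mult := by
    rw [← Finset.prod_mul_distrib]
    refine Finset.prod_le_prod (fun w _ => pow_nonneg (archVNorm_nonneg _ _) _) fun w _ => ?_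
    rw [← mul_pow]
    exact pow_le_pow_left₀ (archVNorm_nonneg _ _) (archVNorm_mulVec_le w T x) _
  rw [vecHt, vecHt, matHt, ← Real.mul_rpow
    (mul_nonneg (finprod_nonneg fun v => finMNorm_nonneg T)
      (Finset.prod_nonneg fun w _ => pow_nonneg (archMNorm_nonneg w T) _))
    (mul_nonneg (finprod_nonneg fun v => finVNorm_nonneg x)
      (Finset.prod_nonneg fun w _ => pow_nonneg (archVNorm_nonneg w x) _))]
  refine Real.rpow_le_rpow
    (mul_nonneg (finprod_nonneg fun v => finVNorm_nonneg _)
      (Finset.prod_nonneg fun w _ => pow_nonneg (archVNorm_nonneg _ _) _)) ?_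
    (by positivity)
  calc (∏ᶠ v : HeightOneSpectrum (𝓞 K), finVNorm v (T.mulVec x)) *
        ∏ w : InfinitePlace K, archVNorm w (T.mulVec x) ^ w.mult
      ≤ ((∏ᶠ v : HeightOneSpectrum (𝓞 K), finMNorm v T) *
          ∏ᶠ v : HeightOneSpectrum (𝓞 K), finVNorm v x) *
        ((∏ w : InfinitePlace K, archMNorm w T ^ w.mult) *
          ∏ w : InfinitePlace K, archVNorm w x ^ w.mult) := by
        refine mul_le_mul hfin harch
          (Finset.prod_nonneg fun w _ => pow_nonneg (archVNorm_nonneg _ _) _)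
          (mul_nonneg (finprod_nonneg fun v => finMNorm_nonneg T)
            (finprod_nonneg fun v => finVNorm_nonneg x))
    _ = ((∏ᶠ v : HeightOneSpectrum (𝓞 K), finMNorm v T) *
          ∏ w : InfinitePlace K, archMNorm w T ^ w.mult) *
        ((∏ᶠ v : HeightOneSpectrum (𝓞 K), finVNorm v x) *
          ∏ w : InfinitePlace K, archVNorm w x ^ w.mult) := by ring

lemma ratio_le [Nonempty (Fin n)] {T : Matrix (Fin n) (Fin n) K} (hT : IsUnit T.det)
    (x : {x : Fin n → K // x ≠ 0}) :
    vecHt (T.mulVec (x : Fin n → K)) / vecHt (x : Fin n → K) ≤ matHt T := by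
  rw [div_le_iff₀ (vecHt_pos x.2)]
  exact key_upper hT x.2

lemma opHt_bdd [Nonempty (Fin n)] {T : Matrix (Fin n) (Fin n) K} (hT : IsUnit T.det) :
    BddAbove (Set.range fun x : {x : Fin n → K // x ≠ 0} =>
      vecHt (T.mulVec (x : Fin n → K)) / vecHt (x : Fin n → K)) := by
  refine ⟨matHt T, ?_⟩
  rintro - ⟨x, rfl⟩
  exact ratio_le hT x

lemma opHt_le [Nonempty (Fin n)] {T : Matrix (Fin n) (Fin n) K} (hT : IsUnit T.det) :
    opHt T ≤ matHt T :=
  Real.iSup_le (fun x => ratio_le hT x) (matHt_nonneg T)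

lemma opHt_nonneg (T : Matrix (Fin n) (Fin n) K) : 0 ≤ opHt T :=
  Real.iSup_nonneg fun x => div_nonneg (vecHt_nonneg _) (vecHt_nonneg _)

end partF1

section partF2
open NumberField NumberField.InfinitePlace IsDedekindDomain Function

variable {K : Type} [Field K] [NumberField K] {n : ℕ}

lemma finMNorm_pos [Nonempty (Fin n)] {T : Matrix (Fin n) (Fin n) K} (hT : IsUnit T.det)
    (v : HeightOneSpectrum (𝓞 K)) : 0 < finMNorm v T := by
  obtain ⟨j0, hj0⟩ := Function.ne_iff.mp (rows_ne hT (Classical.arbitrary _))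
  exact lt_of_lt_of_le (finAbs_pos hj0) (finAbs_le_finMNorm T _ j0)

lemma map_entry_im {w : InfinitePlace K} (hw : w.IsReal) (z : K) : (w.embedding z).im = 0 := by
  rw [← embedding_of_isReal_apply hw]; exact Complex.ofReal_im _

lemma archMNorm_pos [Nonempty (Fin n)] {T : Matrix (Fin n) (Fin n) K} (hT : IsUnit T.det)
    (w : InfinitePlace K) : 0 < archMNorm w T := by
  apply l2OpNorm_pos
  obtain ⟨j0, hj0⟩ := Function.ne_iff.mp (rows_ne hT (Classical.arbitrary _))
  intro h
  apply hj0
  have := congrFun (congrFun h (Classical.arbitrary _)) j0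
  rw [Matrix.map_apply] at this
  exact (map_eq_zero_iff _ w.embedding.injective).mp (by simpa using this)

lemma local_exact [Nonempty (Fin n)] {T : Matrix (Fin n) (Fin n) K}
    {v : HeightOneSpectrum (𝓞 K)} {iv jv : Fin n}
    (hmax : finMNorm v T = finAbs v (T iv jv))
    (hall : ∀ a b, finAbs v (T a b) ≤ finAbs v (T iv jv))
    (hMpos : 0 < finMNorm v T)
    {x : Fin n → K} (herr : ∀ i, finAbs v (x i - (if i = jv then 1 else 0)) < 1) :
    finVNorm v x = 1 ∧ finVNorm v (T.mulVec x) = finMNorm v T := by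
  classical
  set δ : Fin n → K := fun i => if i = jv then 1 else 0 with hδ
  set E : Fin n → K := fun i => x i - δ i with hE
  have herr' : ∀ i, finAbs v (E i) < 1 := fun i => herr i
  have hx1 : finVNorm v x = 1 := by
    refine finVNorm_eq_one (fun i => ?_) jv ?_
    · by_cases hij : i = jv
      · subst hij
        have h1 : x i = 1 + (x i - 1) := by ring
        have h2 : finAbs v (x i - 1) < 1 := by simpa using herr i
        rw [h1, finAbs_add_eq (by rwa [finAbs_one])]
        exact le_of_eq finAbs_one
      · have h2 : finAbs v (x i) < 1 := by simpa [hij] using herr i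
        exact h2.le
    · have h1 : x jv = 1 + (x jv - 1) := by ring
      have h2 : finAbs v (x jv - 1) < 1 := by simpa using herr jv
      rw [h1, finAbs_add_eq (by rwa [finAbs_one]), finAbs_one]
  refine ⟨hx1, ?_⟩
  have hxsum : x = δ + E := by funext i; simp [hE]
  have hδsingle : δ = Pi.single jv (1:K) := by
    funext i
    rw [Pi.single_apply, hδ]
  have hTδ : T.mulVec δ = fun i => T i jv := by
    rw [hδsingle, Matrix.mulVec_single]
    funext i; simp
  have hTx : T.mulVec x = (fun i => T i jv) + T.mulVec E := by
    rw [hxsum, Matrix.mulVec_add, hTδ]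
  have hTE : ∀ i, finAbs v (T.mulVec E i) < finMNorm v T := by
    intro i
    have hcomp : T.mulVec E i = ∑ k, T i k * E k := by
      simp [Matrix.mulVec, dotProduct]
    rw [hcomp]
    refine finAbs_sum_lt hMpos fun k _ => ?_
    rw [finAbs_mul]
    calc finAbs v (T i k) * finAbs v (E k)
        ≤ finMNorm v T * finAbs v (E k) :=
          mul_le_mul_of_nonneg_right (hmax ▸ hall i k) (finAbs_nonneg _)
      _ < finMNorm v T * 1 := mul_lt_mul_of_pos_left (herr' k) hMpos
      _ = finMNorm v T := mul_one _
  have hTxc : ∀ i, T.mulVec x i = T i jv + T.mulVec E i := by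
    intro i
    rw [hTx]
    rfl
  refine le_antisymm (finVNorm_le fun i => ?_) ?_
  · rw [hTxc i]
    exact le_trans (finAbs_add_le _ _) (max_le (hmax ▸ hall i jv) (hTE i).le)
  · have h1 : finAbs v (T.mulVec x iv) = finMNorm v T := by
      rw [hTxc iv, finAbs_add_eq (by rw [← hmax]; exact hTE iv), ← hmax]
    exact h1 ▸ finAbs_le_finVNorm (T.mulVec x) iv

lemma local_triv [Nonempty (Fin n)] {T : Matrix (Fin n) (Fin n) K} (hT : IsUnit T.det)
    {v : HeightOneSpectrum (𝓞 K)} (h1 : finMNorm v T = 1) (h2 : finMNorm v T⁻¹ = 1)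
    (x : Fin n → K) : finVNorm v (T.mulVec x) = finVNorm v x := by
  apply le_antisymm
  · have := finVNorm_mulVec_le (v := v) T x
    rwa [h1, one_mul] at this
  · have := finVNorm_mulVec_le (v := v) T⁻¹ (T.mulVec x)
    rwa [h2, one_mul, Matrix.mulVec_mulVec, Matrix.nonsing_inv_mul T hT,
      Matrix.one_mulVec] at this

end partF2

section partF3
open NumberField NumberField.InfinitePlace IsDedekindDomain Function

variable {K : Type} [Field K] [NumberField K] {n : ℕ}

lemma key_lower [Nonempty (Fin n)] {T : Matrix (Fin n) (Fin n) K} (hT : IsUnit T.det)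
    {θ : ℝ} (hθ0 : 0 < θ) (hθ1 : θ < 1) : θ * matHt T ≤ opHt T := by
  classical
  have hT' : IsUnit (T⁻¹).det := Matrix.isUnit_nonsing_inv_det T hT
  have hsT : (mulSupport fun v : HeightOneSpectrum (𝓞 K) => finMNorm v T).Finite :=
    finMNorm_support (rows_ne hT)
  have hsT' : (mulSupport fun v : HeightOneSpectrum (𝓞 K) => finMNorm v T⁻¹).Finite :=
    finMNorm_support (rows_ne hT')
  set S : Finset (HeightOneSpectrum (𝓞 K)) := (hsT.union hsT').toFinset with hS
  choose iv jv hvmax hvall using fun v : HeightOneSpectrum (𝓞 K) => exists_finMNorm_eq v T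
  -- CRT
  have prime : ∀ v ∈ S, Prime (HeightOneSpectrum.asIdeal v) :=
    fun v _ => Ideal.prime_of_isPrime v.ne_bot v.isPrime
  have coprime : ∀ v ∈ S, ∀ v' ∈ S, v ≠ v' →
      HeightOneSpectrum.asIdeal v ≠ HeightOneSpectrum.asIdeal v' :=
    fun v _ v' _ hne h => hne (HeightOneSpectrum.ext h)
  have hcrt : ∀ i : Fin n, ∃ ai : 𝓞 K, ∀ v ∈ S,
      ai - (if i = jv v then 1 else 0) ∈ v.asIdeal := by
    intro i
    obtain ⟨ai, hai⟩ := IsDedekindDomain.exists_forall_sub_mem_ideal (s := S)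
      (fun v => v.asIdeal) (fun _ => 1) prime coprime
      (fun vs => if i = jv vs.1 then 1 else 0)
    exact ⟨ai, fun v hv => by simpa using hai v hv⟩
  choose a ha using hcrt
  -- the ideal
  set 𝔞 : Ideal (𝓞 K) := ∏ v ∈ S, v.asIdeal with h𝔞def
  have h𝔞 : 𝔞 ≠ ⊥ := by
    rw [h𝔞def]
    refine Finset.prod_induction _ (fun I => I ≠ ⊥) (fun I J hI hJ h => ?_) ?_
      (fun v _ => v.ne_bot)
    · rcases Ideal.mul_eq_bot.mp h with h | h
      · exact hI h
      · exact hJ h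
    · rw [Ideal.one_eq_top]
      exact top_ne_bot
  have h𝔞le : ∀ v ∈ S, 𝔞 ≤ v.asIdeal := fun v hv =>
    Ideal.le_of_dvd (Finset.dvd_prod_of_mem _ hv)
  -- arch data
  have hMreal : ∀ w : InfinitePlace K, w.IsReal →
      ∀ i j, ((T.map w.embedding) i j).im = 0 := fun w hw i j => map_entry_im hw _
  have hMpos : ∀ w : InfinitePlace K, 0 < l2OpNorm (T.map w.embedding) :=
    fun w => archMNorm_pos hT w
  have hcw : ∀ w : InfinitePlace K,
      θ * l2OpNorm (T.map w.embedding) < l2OpNorm (T.map w.embedding) := fun w => by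
    nlinarith [hMpos w]
  choose u hu1 hureal huM using fun w : InfinitePlace K =>
    exists_unit_vec (w := w) (T.map w.embedding) (hMreal w)
      (le_of_lt (mul_pos hθ0 (hMpos w))) (hcw w)
  -- approximation
  obtain ⟨B, hB0, happrox⟩ := approx_main 𝔞 h𝔞 a u hureal
  set D : InfinitePlace K → ℝ := fun w => ‖Matrix.toEuclideanLin (T.map w.embedding) (u w)‖
    with hD
  have hDgt : ∀ w, θ * l2OpNorm (T.map w.embedding) < D w := huM
  set t : ℝ := 1 + ∑ w : InfinitePlace K,
    (θ * l2OpNorm (T.map w.embedding) * B + l2OpNorm (T.map w.embedding) * B + 1) /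
      (D w - θ * l2OpNorm (T.map w.embedding)) with ht
  have hterm0 : ∀ w : InfinitePlace K, 0 ≤
      (θ * l2OpNorm (T.map w.embedding) * B + l2OpNorm (T.map w.embedding) * B + 1) /
        (D w - θ * l2OpNorm (T.map w.embedding)) := by
    intro w
    refine div_nonneg ?_ (by linarith [hDgt w])
    have := hMpos w
    positivity
  have ht1 : (1:ℝ) ≤ t := le_add_of_nonneg_right (Finset.sum_nonneg fun w _ => hterm0 w)
  have htkey : ∀ w : InfinitePlace K,
      θ * l2OpNorm (T.map w.embedding) * B + l2OpNorm (T.map w.embedding) * B + 1 ≤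
        t * (D w - θ * l2OpNorm (T.map w.embedding)) := by
    intro w
    have h1 : (θ * l2OpNorm (T.map w.embedding) * B + l2OpNorm (T.map w.embedding) * B + 1) /
        (D w - θ * l2OpNorm (T.map w.embedding)) ≤ t := by
      rw [ht]
      have := Finset.single_le_sum (fun w _ => hterm0 w) (Finset.mem_univ w)
      linarith
    have hpos : 0 < D w - θ * l2OpNorm (T.map w.embedding) := by linarith [hDgt w]
    calc θ * l2OpNorm (T.map w.embedding) * B + l2OpNorm (T.map w.embedding) * B + 1
        = ((θ * l2OpNorm (T.map w.embedding) * B + l2OpNorm (T.map w.embedding) * B + 1) /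
            (D w - θ * l2OpNorm (T.map w.embedding))) *
          (D w - θ * l2OpNorm (T.map w.embedding)) := by
          field_simp
      _ ≤ t * (D w - θ * l2OpNorm (T.map w.embedding)) :=
          mul_le_mul_of_nonneg_right h1 hpos.le
  obtain ⟨y, hy𝔞, hyB⟩ := happrox t
  set xv : Fin n → 𝓞 K := fun i => a i + y i with hxv
  set xK : Fin n → K := fun i => algebraMap (𝓞 K) K (xv i) with hxKdef
  have hz : ∀ w : InfinitePlace K, ‖embVec w xK - t • u w‖ ≤ B := hyB
  -- arch estimates
  have harch : ∀ w : InfinitePlace K,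
      θ * archMNorm w T * archVNorm w xK < archVNorm w (T.mulVec xK) := by
    intro w
    have e1 : archVNorm w (T.mulVec xK) =
        ‖Matrix.toEuclideanLin (T.map w.embedding) (embVec w xK)‖ := by
      rw [archVNorm_eq, embVec_mulVec]
    have e2 : archVNorm w xK = ‖embVec w xK‖ := archVNorm_eq w xK
    have eM : archMNorm w T = l2OpNorm (T.map w.embedding) := rfl
    have htu : ‖t • u w‖ = t := by
      rw [norm_smul, Real.norm_eq_abs, abs_of_pos (by linarith : (0:ℝ) < t), hu1 w, mul_one]
    have hzn : ‖embVec w xK‖ ≤ t + B := by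
      calc ‖embVec w xK‖ = ‖t • u w + (embVec w xK - t • u w)‖ := by
            congr 1
            abel
        _ ≤ ‖t • u w‖ + ‖embVec w xK - t • u w‖ := norm_add_le _ _
        _ ≤ t + B := by rw [htu]; exact add_le_add_right (hz w) t
    have hMz : t * D w - l2OpNorm (T.map w.embedding) * B ≤
        ‖Matrix.toEuclideanLin (T.map w.embedding) (embVec w xK)‖ := by
      have h1 : Matrix.toEuclideanLin (T.map w.embedding) (t • u w) =
          t • Matrix.toEuclideanLin (T.map w.embedding) (u w) :=
        LinearMap.map_smul_of_tower _ _ _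
      have h2 : ‖Matrix.toEuclideanLin (T.map w.embedding) (t • u w)‖ = t * D w := by
        rw [h1, norm_smul, Real.norm_eq_abs, abs_of_pos (by linarith : (0:ℝ) < t)]
      have h3 : Matrix.toEuclideanLin (T.map w.embedding) (t • u w) =
          Matrix.toEuclideanLin (T.map w.embedding) (embVec w xK) +
          Matrix.toEuclideanLin (T.map w.embedding) (t • u w - embVec w xK) := by
        rw [← map_add]
        congr 1
        abel
      have h4 : ‖Matrix.toEuclideanLin (T.map w.embedding) (t • u w - embVec w xK)‖ ≤
          l2OpNorm (T.map w.embedding) * B := by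
        refine le_trans (l2OpNorm_mulVec_le _ _) ?_
        refine mul_le_mul_of_nonneg_left ?_ (hMpos w).le
        rw [norm_sub_rev]
        exact hz w
      have h5 := norm_add_le (Matrix.toEuclideanLin (T.map w.embedding) (embVec w xK))
        (Matrix.toEuclideanLin (T.map w.embedding) (t • u w - embVec w xK))
      rw [← h3, h2] at h5
      linarith
    rw [e1, e2, eM]
    have hA : θ * l2OpNorm (T.map w.embedding) * ‖embVec w xK‖ ≤
        θ * l2OpNorm (T.map w.embedding) * (t + B) := by
      refine mul_le_mul_of_nonneg_left hzn ?_
      have := hMpos w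
      positivity
    have hkey2 : θ * l2OpNorm (T.map w.embedding) * (t + B) ≤
        t * D w - l2OpNorm (T.map w.embedding) * B - 1 := by
      nlinarith [htkey w]
    linarith
  -- xK is nonzero
  have hx0 : xK ≠ 0 := by
    intro h0
    obtain ⟨w0⟩ := (inferInstance : Nonempty (InfinitePlace K))
    have h1 := harch w0
    rw [h0, Matrix.mulVec_zero] at h1
    have h2 : archVNorm w0 (0 : Fin n → K) = 0 := by
      simp [archVNorm]
    rw [h2] at h1
    have h3 : 0 ≤ θ * archMNorm w0 T * archVNorm w0 (0 : Fin n → K) := by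
      rw [h2]
      simp
    linarith
  -- finite places, pointwise
  have hpt : ∀ v : HeightOneSpectrum (𝓞 K),
      finVNorm v (T.mulVec xK) = finMNorm v T * finVNorm v xK := by
    intro v
    by_cases hv : v ∈ S
    · have herr : ∀ i, finAbs v (xK i - (if i = jv v then 1 else 0)) < 1 := by
        intro i
        have hmem : xv i - (if i = jv v then 1 else 0) ∈ v.asIdeal := by
          have h1 := ha i v hv
          have h2 := h𝔞le v hv (hy𝔞 i)
          have h3 : xv i - (if i = jv v then 1 else 0) =
              (a i - (if i = jv v then 1 else 0)) + y i := by
            rw [hxv]; ring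
          rw [h3]
          exact Ideal.add_mem _ h1 h2
        have h4 : xK i - (if i = jv v then 1 else 0) =
            algebraMap (𝓞 K) K (xv i - (if i = jv v then 1 else 0)) := by
          rw [map_sub]
          congr 1
          split_ifs
          · exact (map_one _).symm
          · exact (map_zero _).symm
        rw [h4]
        exact finAbs_lt_one_of_mem hmem
      obtain ⟨hx1, hTx1⟩ := local_exact (hvmax v) (hvall v) (finMNorm_pos hT v) herr
      rw [hx1, hTx1, mul_one]
    · have hv1 : finMNorm v T = 1 := by
        refine Function.notMem_mulSupport.mp fun hc => hv ?_
        rw [hS, Set.Finite.mem_toFinset]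
        exact Set.mem_union_left _ hc
      have hv2 : finMNorm v T⁻¹ = 1 := by
        refine Function.notMem_mulSupport.mp fun hc => hv ?_
        rw [hS, Set.Finite.mem_toFinset]
        exact Set.mem_union_right _ hc
      rw [local_triv hT hv1 hv2 xK, hv1, one_mul]
  -- assemble
  have hsx := finVNorm_support hx0
  have hfin : (∏ᶠ v : HeightOneSpectrum (𝓞 K), finVNorm v (T.mulVec xK)) =
      (∏ᶠ v : HeightOneSpectrum (𝓞 K), finMNorm v T) *
      ∏ᶠ v : HeightOneSpectrum (𝓞 K), finVNorm v xK := by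
    rw [← finprod_mul_distrib hsT hsx]
    exact finprod_congr hpt
  have harch2 : θ ^ (Module.finrank ℚ K) *
      ((∏ w : InfinitePlace K, archMNorm w T ^ w.mult) *
       (∏ w : InfinitePlace K, archVNorm w xK ^ w.mult)) ≤
      ∏ w : InfinitePlace K, archVNorm w (T.mulVec xK) ^ w.mult := by
    have step1 : (∏ w : InfinitePlace K, (θ * archMNorm w T * archVNorm w xK) ^ w.mult) ≤
        ∏ w : InfinitePlace K, archVNorm w (T.mulVec xK) ^ w.mult := by
      refine Finset.prod_le_prod (fun w _ => ?_) (fun w _ => ?_)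
      · have h1 := archMNorm_pos hT w
        have h2 := archVNorm_nonneg w xK
        positivity
      · have h1 := (archMNorm_pos hT w).le
        have h2 := archVNorm_nonneg w xK
        exact pow_le_pow_left₀ (by positivity) (harch w).le _
    refine le_trans (le_of_eq ?_) step1
    rw [← sum_mult_eq (K := K), ← Finset.prod_pow_eq_pow_sum,
      ← Finset.prod_mul_distrib, ← Finset.prod_mul_distrib]
    exact Finset.prod_congr rfl fun w _ => by rw [mul_pow, mul_pow, mul_assoc]
  -- final computation
  set P := ∏ᶠ v : HeightOneSpectrum (𝓞 K), finMNorm v T with hPdef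
  set Fx := ∏ᶠ v : HeightOneSpectrum (𝓞 K), finVNorm v xK with hFxdef
  set AM := ∏ w : InfinitePlace K, archMNorm w T ^ w.mult with hAMdef
  set Ax := ∏ w : InfinitePlace K, archVNorm w xK ^ w.mult with hAxdef
  set ATx := ∏ w : InfinitePlace K, archVNorm w (T.mulVec xK) ^ w.mult with hATxdef
  set FTx := ∏ᶠ v : HeightOneSpectrum (𝓞 K), finVNorm v (T.mulVec xK) with hFTxdef
  have hP0 : 0 < P := finprod_pos' hsT (fun v => finMNorm_pos hT v)
  have hFx0 : 0 < Fx := finprod_pos' hsx (fun v => finVNorm_pos hx0)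
  have hAM0 : 0 < AM := Finset.prod_pos fun w _ => pow_pos (archMNorm_pos hT w) _
  have hAx0 : 0 < Ax := Finset.prod_pos fun w _ => pow_pos (archVNorm_pos w hx0) _
  have hATx0 : 0 ≤ ATx :=
    Finset.prod_nonneg fun w _ => pow_nonneg (archVNorm_nonneg _ _) _
  have hlow : θ ^ (Module.finrank ℚ K) * ((P * AM) * (Fx * Ax)) ≤ FTx * ATx := by
    rw [hfin]
    calc θ ^ (Module.finrank ℚ K) * ((P * AM) * (Fx * Ax))
        = (P * Fx) * (θ ^ (Module.finrank ℚ K) * (AM * Ax)) := by ring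
      _ ≤ (P * Fx) * ATx :=
          mul_le_mul_of_nonneg_left harch2 (mul_nonneg hP0.le hFx0.le)
  have e1 : matHt T = (P * AM) ^ ((Module.finrank ℚ K : ℝ))⁻¹ := by
    rw [matHt, ← hPdef, ← hAMdef]
  have e2 : vecHt xK = (Fx * Ax) ^ ((Module.finrank ℚ K : ℝ))⁻¹ := by
    rw [vecHt, ← hFxdef, ← hAxdef]
  have e3 : vecHt (T.mulVec xK) = (FTx * ATx) ^ ((Module.finrank ℚ K : ℝ))⁻¹ := by
    rw [vecHt, ← hFTxdef, ← hATxdef]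
  have hθd : ((θ ^ (Module.finrank ℚ K) : ℝ)) ^ ((Module.finrank ℚ K : ℝ))⁻¹ = θ := by
    rw [← Real.rpow_natCast θ (Module.finrank ℚ K), ← Real.rpow_mul hθ0.le,
      mul_inv_cancel₀ (ne_of_gt (dpos (K := K))), Real.rpow_one]
  have hfinal : θ * (matHt T * vecHt xK) ≤ vecHt (T.mulVec xK) := by
    rw [e1, e2, e3]
    calc θ * ((P * AM) ^ ((Module.finrank ℚ K : ℝ))⁻¹ *
          (Fx * Ax) ^ ((Module.finrank ℚ K : ℝ))⁻¹)
        = (θ ^ (Module.finrank ℚ K) * ((P * AM) * (Fx * Ax))) ^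
            ((Module.finrank ℚ K : ℝ))⁻¹ := by
          rw [Real.mul_rpow (pow_nonneg hθ0.le _)
              (mul_nonneg (mul_nonneg hP0.le hAM0.le) (mul_nonneg hFx0.le hAx0.le)),
            Real.mul_rpow (mul_nonneg hP0.le hAM0.le) (mul_nonneg hFx0.le hAx0.le), hθd]
      _ ≤ (FTx * ATx) ^ ((Module.finrank ℚ K : ℝ))⁻¹ :=
          Real.rpow_le_rpow (mul_nonneg (pow_nonneg hθ0.le _)
            (mul_nonneg (mul_nonneg hP0.le hAM0.le) (mul_nonneg hFx0.le hAx0.le)))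
            hlow (by positivity)
  have hratio : θ * matHt T ≤ vecHt (T.mulVec xK) / vecHt xK := by
    rw [le_div_iff₀ (vecHt_pos hx0)]
    calc θ * matHt T * vecHt xK = θ * (matHt T * vecHt xK) := by ring
      _ ≤ vecHt (T.mulVec xK) := hfinal
  refine le_trans hratio ?_
  rw [opHt]
  exact le_ciSup (opHt_bdd hT) ⟨xK, hx0⟩

end partF3

section partG
open NumberField NumberField.InfinitePlace IsDedekindDomain Function

variable {K : Type} [Field K] [NumberField K] {n : ℕ}

lemma mult_ne_zero (w : InfinitePlace K) : w.mult ≠ 0 := by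
  rw [InfinitePlace.mult]
  split_ifs <;> norm_num

lemma matHt_zero_dim (T : Matrix (Fin 0) (Fin 0) K) : matHt T = 0 := by
  obtain ⟨w0⟩ := (inferInstance : Nonempty (InfinitePlace K))
  have h1 : archMNorm w0 T ^ w0.mult = 0 := by
    haveI : Subsingleton (EuclideanSpace ℂ (Fin 0)) :=
      ⟨fun a b => PiLp.ext fun i => Fin.elim0 i⟩
    have h2 : (LinearMap.toContinuousLinearMap
        (Matrix.toEuclideanLin (T.map w0.embedding))) = 0 := by
      apply ContinuousLinearMap.ext
      intro z
      exact Subsingleton.elim _ _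
    rw [archMNorm, l2OpNorm, h2, norm_zero]
    exact zero_pow (mult_ne_zero w0)
  rw [matHt, Finset.prod_eq_zero (Finset.mem_univ w0) h1, mul_zero,
    Real.zero_rpow (inv_ne_zero (ne_of_gt (dpos (K := K))))]

lemma opHt_zero_dim (T : Matrix (Fin 0) (Fin 0) K) : opHt T = 0 := by
  haveI : IsEmpty {x : Fin 0 → K // x ≠ 0} :=
    ⟨fun ⟨x, hx⟩ => hx (funext fun i => i.elim0)⟩
  exact Real.iSup_of_isEmpty _

end partG


/-- For invertible `T ∈ GL_n(K)`, the operator height equals the product of the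
normalized local operator norms: `H^op(T) = H(T)`. -/
theorem stmt_12 {K : Type} [Field K] [NumberField K] {n : ℕ}
    (T : Matrix (Fin n) (Fin n) K) (hT : IsUnit T.det) :
    opHt T = matHt T := by
  rcases Nat.eq_zero_or_pos n with hn | hn
  · subst hn
    rw [opHt_zero_dim, matHt_zero_dim]
  · haveI : Nonempty (Fin n) := ⟨⟨0, hn⟩⟩
    refine le_antisymm (opHt_le hT) ?_
    by_contra hlt
    push_neg at hlt
    have hM0 : 0 < matHt T := lt_of_le_of_lt (opHt_nonneg T) hlt
    set θ : ℝ := (opHt T / matHt T + 1) / 2 with hθ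
    have hr0 : 0 ≤ opHt T / matHt T := div_nonneg (opHt_nonneg T) hM0.le
    have hr1 : opHt T / matHt T < 1 := (div_lt_one hM0).mpr hlt
    have hθ0 : 0 < θ := by rw [hθ]; linarith
    have hθ1 : θ < 1 := by rw [hθ]; linarith
    have hkey := key_lower hT hθ0 hθ1
    have hgt : opHt T < θ * matHt T := by
      have h1 : opHt T / matHt T < θ := by rw [hθ]; linarith
      calc opHt T = (opHt T / matHt T) * matHt T := by field_simp
        _ < θ * matHt T := mul_lt_mul_of_pos_right h1 hM0
    linarith
end
end
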